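/- arXiv:2410.14116 — 2 statements merged into one kernel-verified Lean document; each statement's English description precedes it below -/
import Mathlib

section
/- Let (X,U,T,c) be an MDP satisfying Assumption M for discount factor β ∈ (0,1), and let (X,U,S,ĉ) be an MDP satisfying Assumption B, with γ*_{ĉ,S,β} an optimal deterministic stationary policy for the β-discounted MDP (X,U,S,ĉ). Then: (i) ‖J*_β(c,T) − J*_β(ĉ,S)‖_∞ ≤ (1/(1−β))‖c−ĉ‖_∞ + (β‖c‖_Lip / ((1−β)(1−β‖T‖_Lip))) d_{W1}(T,S); (ii) ‖J_β(c,T,γ*_{ĉ,S,β}) − J*_β(c,T)‖_∞ ≤ (2/(1−β)²)‖c−ĉ‖_∞ + (2β‖c‖_Lip / ((1−β)²(1−β‖T‖_Lip))) d_{W1}(T,S). If additionally (X,U,S,ĉ) satisfies Assumption M for the same β (with constants ‖ĉ‖_Lip, ‖S‖_Lip), then (iii) ‖J_β(c,T,γ*_{ĉ,S,β}) − J*_β(c,T)‖_∞ ≤ (2/(1−β))‖c−ĉ‖_∞ + (β/(1−β)) ( ‖c‖_Lip/(1−β‖T‖_Lip) + ‖ĉ‖_Lip/(1−β‖S‖_Lip)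 ) d_{W1}(T,S). -/
open MeasureTheory Filter Topology
open scoped NNReal ENNReal

noncomputable section

namespace MDPRobust

variable {X : Type*} {U : Type*} [MeasurableSpace X] [MeasurableSpace U]

/-- A history-dependent, randomized policy: at time `t`, given the history
`((x_0,u_0),…,(x_{t-1},u_{t-1})), x_t`, a distribution over actions. -/
def Policy (X U : Type*) [MeasurableSpace X] [MeasurableSpace U] : Type _ :=
  (t : ℕ) → ((Fin t → X × U) × X) → Measure U

/-- Admissibility of a policy: measurability and each action distribution is a
probability measure. -/
def IsAdmissible (γ : Policy X U) : Prop :=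
  (∀ t, Measurable (γ t)) ∧ ∀ t h, IsProbabilityMeasure (γ t h)

/-- Law of the history `((x_0,u_0),…,(x_{t-1},u_{t-1})), x_t` for the controlled Markov
process with transition kernel `T`, policy `γ` and initial state `x`. -/
def histMeas (T : X → U → Measure X) (γ : Policy X U) (x : X) :
    (t : ℕ) → Measure ((Fin t → X × U) × X)
  | 0 => Measure.dirac (fun i => i.elim0, x)
  | (t + 1) =>
      Measure.bind (histMeas T γ x t) fun z =>
        Measure.bind (γ t z) fun u =>
          Measure.map (fun x' => (Fin.snoc z.1 (z.2, u), x')) (T z.2 u)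

/-- Expected cost incurred at time `t`: `E^{T,γ}[c(X_t,U_t) | X_0 = x]`. -/
def costAt (c : X → U → ℝ) (T : X → U → Measure X) (γ : Policy X U) (x : X) (t : ℕ) : ℝ :=
  ∫ z, ∫ u, c z.2 u ∂(γ t z) ∂(histMeas T γ x t)

/-- Discounted value of a policy: `J_β(c,T,γ)(x)`. -/
def Jdisc (β : ℝ) (c : X → U → ℝ) (T : X → U → Measure X) (γ : Policy X U) (x : X) : ℝ :=
  ∑' t : ℕ, β ^ t * costAt c T γ x t

/-- Optimal discounted value `J*_β(c,T)(x)`: infimum over admissible policies. -/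
def JdiscOpt (β : ℝ) (c : X → U → ℝ) (T : X → U → Measure X) (x : X) : ℝ :=
  sInf {r | ∃ γ : Policy X U, IsAdmissible γ ∧ r = Jdisc β c T γ x}

/-- Average cost of a policy: `J_∞(c,T,γ)(x)`. -/
def Javg (c : X → U → ℝ) (T : X → U → Measure X) (γ : Policy X U) (x : X) : ℝ :=
  Filter.limsup (fun n : ℕ => (∑ t ∈ Finset.range n, costAt c T γ x t) / n) atTop

/-- Optimal average cost `J*_∞(c,T)(x)`. -/
def JavgOpt (c : X → U → ℝ) (T : X → U → Measure X) (x : X) : ℝ :=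
  sInf {r | ∃ γ : Policy X U, IsAdmissible γ ∧ r = Javg c T γ x}

/-- The (Markov, randomized-as-Dirac) policy induced by a deterministic stationary
policy `g : X → U`. -/
def statPolicy (g : X → U) : Policy X U := fun _ z => Measure.dirac (g z.2)

/-- `|∫ f dμ − ∫ f dν|`. -/
def dFun (f : X → ℝ) (μ ν : Measure X) : ℝ := |∫ y, f y ∂μ - ∫ y, f y ∂ν|

section Topo

variable [MetricSpace X] [MetricSpace U]

/-- Assumption B (standing assumptions): `c` nonnegative, bounded, jointly continuous,
`T` a weakly continuous controlled probability kernel. (Compactness of `U` is carried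
as an instance hypothesis.) -/
def AssumptionB (T : X → U → Measure X) (c : X → U → ℝ) : Prop :=
  (∀ x u, 0 ≤ c x u) ∧ (∃ B : ℝ, ∀ x u, |c x u| ≤ B) ∧
  Continuous (Function.uncurry c) ∧
  (∀ x u, IsProbabilityMeasure (T x u)) ∧
  Measurable (Function.uncurry T) ∧
  (∀ v : X → ℝ, Continuous v → (∃ B : ℝ, ∀ y, |v y| ≤ B) →
    Continuous fun p : X × U => ∫ y, v y ∂(T p.1 p.2))

/-- `x ↦ c(x,u)` is `K`-Lipschitz for every `u`. -/
def CostLipschitz (c : X → U → ℝ) (K : ℝ≥0) : Prop :=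
  ∀ u, LipschitzWith K fun x => c x u

/-- `x ↦ T(·|x,u)` is `K`-Lipschitz into `(P(X), W₁)`, expressed through the
Kantorovich–Rubinstein dual form of the Wasserstein-1 distance. -/
def KernelLipschitz (T : X → U → Measure X) (K : ℝ≥0) : Prop :=
  ∀ f : X → ℝ, LipschitzWith 1 f → ∀ u x y,
    |∫ a, f a ∂(T x u) - ∫ a, f a ∂(T y u)| ≤ K * dist x y

/-- Assumption M (Wasserstein regular MDP for discount factor `β`). -/
def AssumptionM (β : ℝ) (T : X → U → Measure X) (c : X → U → ℝ)
    (Kc KT : ℝ≥0) : Prop :=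
  AssumptionB T c ∧ CostLipschitz c Kc ∧ KernelLipschitz T KT ∧ β * KT < 1

/-- Assumption E(c): joint Lipschitz continuity of the kernel in state and action,
in the dual (Kantorovich–Rubinstein) form of the Wasserstein-1 distance. -/
def AssumptionEc (T : X → U → Measure X) (Lt : ℝ≥0) : Prop :=
  ∀ f : X → ℝ, LipschitzWith 1 f → ∀ x y u u',
    |∫ a, f a ∂(T x u) - ∫ a, f a ∂(T y u')| ≤ Lt * (dist x y + dist u u')

/-- Assumption E(b): uniform Lipschitz bound on discounted value functions near `β = 1`. -/
def AssumptionEb (T : X → U → Measure X) (c : X → U → ℝ) (L : ℝ≥0) : Prop :=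
  ∃ βstar : ℝ, 0 < βstar ∧ βstar < 1 ∧
    ∀ β : ℝ, βstar ≤ β → β < 1 → LipschitzWith L (JdiscOpt β c T)

end Topo

/-- Minorization condition: `T(A|x,u) ≥ ε ρ(A)` for all `x`, `u`, Borel `A`. -/
def Minorized (T : X → U → Measure X) (ρ : Measure X) (ε : ℝ≥0) : Prop :=
  ∀ x u, ∀ A : Set X, MeasurableSet A → (ε : ℝ≥0∞) * ρ A ≤ T x u A

end MDPRobust

namespace MDPRobust

open ProbabilityTheory
set_option linter.unusedSectionVars false
set_option linter.unusedVariables false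

section IntegralToolkit
variable {α : Type*} {γ : Type*} {δ : Type*}
  [MeasurableSpace α] [MeasurableSpace γ] [MeasurableSpace δ]

lemma integrable_of_bound (μ : Measure α) [IsProbabilityMeasure μ] {f : α → ℝ} (hf : Measurable f)
    {C : ℝ} (hC : ∀ a, |f a| ≤ C) : Integrable f μ :=
  (integrable_const C).mono' hf.aestronglyMeasurable (Eventually.of_forall hC)

lemma integrable_of_bound' (μ : Measure α) [IsProbabilityMeasure μ] {f : α → ℝ} (hf : Measurable f)
    {C : ℝ} (h0 : ∀ a, 0 ≤ f a) (hC : ∀ a, f a ≤ C) : Integrable f μ :=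
  integrable_of_bound μ hf (fun a => abs_le.2 ⟨by linarith [h0 a, hC a], hC a⟩)

lemma integral_le_bound (μ : Measure α) [IsProbabilityMeasure μ] {f : α → ℝ} (hf : Measurable f)
    {C : ℝ} (h0 : ∀ a, 0 ≤ f a) (hC : ∀ a, f a ≤ C) : ∫ a, f a ∂μ ≤ C := by
  have := integral_mono (integrable_of_bound' μ hf h0 hC) (integrable_const C) hC
  simpa using this

lemma abs_integral_le_bound (μ : Measure α) [IsProbabilityMeasure μ] {f : α → ℝ}
    (hf : Measurable f) {C : ℝ} (h0 : ∀ a, 0 ≤ f a) (hC : ∀ a, f a ≤ C) :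
    |∫ a, f a ∂μ| ≤ C := by
  rw [abs_of_nonneg (integral_nonneg h0)]; exact integral_le_bound μ hf h0 hC

lemma isProbabilityMeasure_bind (μ : Measure α) [IsProbabilityMeasure μ] {κ : α → Measure γ}
    (hκ : Measurable κ) (hκp : ∀ a, IsProbabilityMeasure (κ a)) :
    IsProbabilityMeasure (μ.bind κ) := by
  constructor
  rw [Measure.bind_apply MeasurableSet.univ hκ.aemeasurable]
  simp [measure_univ]

lemma integral_bind' (μ : Measure α) [IsProbabilityMeasure μ] {κ : α → Measure γ}
    (hκ : Measurable κ) (hκp : ∀ a, IsProbabilityMeasure (κ a))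
    {f : γ → ℝ} (hf : Measurable f) {C : ℝ} (h0 : ∀ b, 0 ≤ f b) (hC : ∀ b, f b ≤ C) :
    ∫ b, f b ∂(μ.bind κ) = ∫ a, ∫ b, f b ∂(κ a) ∂μ := by
  have hF : Measurable fun b => ENNReal.ofReal (f b) := ENNReal.measurable_ofReal.comp hf
  have h1 : ∀ (ν : Measure γ), ∫ b, f b ∂ν = (∫⁻ b, ENNReal.ofReal (f b) ∂ν).toReal := fun ν =>
    integral_eq_lintegral_of_nonneg_ae (Eventually.of_forall h0) hf.aestronglyMeasurable
  rw [h1, Measure.lintegral_bind hκ.aemeasurable hF.aemeasurable]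
  have h2 : (fun a => ∫ b, f b ∂κ a) = fun a => (∫⁻ b, ENNReal.ofReal (f b) ∂κ a).toReal :=
    funext fun a => h1 (κ a)
  rw [h2]
  refine (integral_toReal ((Measure.measurable_lintegral hF).comp hκ).aemeasurable ?_).symm
  refine Eventually.of_forall fun a => ?_
  show ∫⁻ b, ENNReal.ofReal (f b) ∂κ a < ⊤
  calc ∫⁻ b, ENNReal.ofReal (f b) ∂κ a ≤ ∫⁻ _, ENNReal.ofReal C ∂κ a :=
        lintegral_mono fun b => ENNReal.ofReal_le_ofReal (hC b)
    _ = ENNReal.ofReal C := by haveI := hκp a; simp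
    _ < ⊤ := ENNReal.ofReal_lt_top

lemma integral_map' {e : α → γ} (he : Measurable e) (μ : Measure α) {f : γ → ℝ}
    (hf : Measurable f) : ∫ b, f b ∂(μ.map e) = ∫ a, f (e a) ∂μ :=
  integral_map he.aemeasurable hf.aestronglyMeasurable

lemma measurable_map_param {κ : α → Measure γ} (hκ : Measurable κ)
    (hκp : ∀ a, IsProbabilityMeasure (κ a))
    {e : α → γ → δ} (he : Measurable (Function.uncurry e)) :
    Measurable fun a => (κ a).map (e a) := by
  apply Measure.measurable_of_measurable_coe
  intro s hs
  have hsec : ∀ a, Measurable (e a) := fun a => he.comp measurable_prodMk_left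
  simp_rw [Measure.map_apply (hsec _) hs]
  letI K : Kernel α γ := ⟨κ, hκ⟩
  haveI : IsMarkovKernel K := ⟨hκp⟩
  exact Kernel.measurable_kernel_prodMk_left (κ := K) (he hs)

lemma measurable_bind_param {κ : α → Measure γ} (hκ : Measurable κ)
    (hκp : ∀ a, IsProbabilityMeasure (κ a))
    {η : α → γ → Measure δ} (hη : Measurable (Function.uncurry η)) :
    Measurable fun a => (κ a).bind (η a) := by
  apply Measure.measurable_of_measurable_coe
  intro s hs
  have hsec : ∀ a, Measurable (η a) := fun a => hη.comp measurable_prodMk_left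
  simp_rw [Measure.bind_apply hs (hsec _).aemeasurable]
  letI K : Kernel α γ := ⟨κ, hκ⟩
  haveI : IsMarkovKernel K := ⟨hκp⟩
  letI H : Kernel (α × γ) δ := ⟨fun p => η p.1 p.2, hη⟩
  exact Measurable.lintegral_kernel_prod_right' (κ := K) (H.measurable_coe hs)

lemma measurable_integral_param {κ : α → Measure γ} (hκ : Measurable κ)
    (hκp : ∀ a, IsProbabilityMeasure (κ a))
    {f : α → γ → ℝ} (hf : Measurable (Function.uncurry f))
    (h0 : ∀ a b, 0 ≤ f a b) :
    Measurable fun a => ∫ b, f a b ∂κ a := by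
  have h1 : (fun a => ∫ b, f a b ∂κ a)
      = fun a => (∫⁻ b, ENNReal.ofReal (f a b) ∂κ a).toReal := by
    funext a
    exact integral_eq_lintegral_of_nonneg_ae (Eventually.of_forall (h0 a))
      ((hf.comp measurable_prodMk_left).aestronglyMeasurable)
  rw [h1]
  letI K : Kernel α γ := ⟨κ, hκ⟩
  haveI : IsMarkovKernel K := ⟨hκp⟩
  exact ENNReal.measurable_toReal.comp
    (Measurable.lintegral_kernel_prod_right' (κ := K)
      (ENNReal.measurable_ofReal.comp hf))

end IntegralToolkit

section Hist
variable {X U : Type*} [MeasurableSpace X] [MeasurableSpace U]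
variable {T : X → U → Measure X} {c : X → U → ℝ} {γ : Policy X U}

lemma measurable_snoc {W : Type*} [MeasurableSpace W] (t : ℕ) :
    Measurable fun p : (Fin t → W) × W => (Fin.snoc p.1 p.2 : Fin (t+1) → W) := by
  refine measurable_pi_lambda _ fun i => ?_
  refine Fin.lastCases ?_ ?_ i
  · simp only [Fin.snoc_last]; exact measurable_snd
  · intro j; simp only [Fin.snoc_castSucc]
    exact (measurable_pi_apply j).comp measurable_fst

/-- One-step transition kernel on histories. -/
def stepK (T : X → U → Measure X) (γ : Policy X U) (t : ℕ) :
    ((Fin t → X × U) × X) → Measure ((Fin (t+1) → X × U) × X) := fun z =>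
  (γ t z).bind fun u => (T z.2 u).map fun x' => ((Fin.snoc z.1 (z.2, u) : Fin (t+1) → X × U), x')

lemma histMeas_succ (x : X) (t : ℕ) :
    histMeas T γ x (t+1) = (histMeas T γ x t).bind (stepK T γ t) := rfl

variable (hT : Measurable (Function.uncurry T)) (hTp : ∀ x u, IsProbabilityMeasure (T x u))
  (hγ : IsAdmissible γ)

section
include hT hTp hγ

omit hγ in
lemma measurable_eta (t : ℕ) :
    Measurable (Function.uncurry fun (z : (Fin t → X × U) × X) (u : U) =>
      (T z.2 u).map fun x' => ((Fin.snoc z.1 (z.2, u) : Fin (t+1) → X × U), x')) := by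
  have hκ : Measurable fun p : ((Fin t → X × U) × X) × U => T p.1.2 p.2 :=
    hT.comp ((measurable_snd.comp measurable_fst).prodMk measurable_snd)
  have he : Measurable (Function.uncurry fun (p : ((Fin t → X × U) × X) × U) (x' : X) =>
      ((Fin.snoc p.1.1 (p.1.2, p.2) : Fin (t+1) → X × U), x')) := by
    apply Measurable.prodMk
    · exact (measurable_snoc t).comp
        (((measurable_fst.comp (measurable_fst.comp measurable_fst))).prodMk
          (((measurable_snd.comp (measurable_fst.comp measurable_fst))).prodMk
            (measurable_snd.comp measurable_fst)))
    · exact measurable_snd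
  exact measurable_map_param hκ (fun p => hTp _ _) he

lemma stepK_prob (t : ℕ) (z : (Fin t → X × U) × X) :
    IsProbabilityMeasure (stepK T γ t z) := by
  haveI := hγ.2 t z
  refine isProbabilityMeasure_bind _ ?_ ?_
  · exact (measurable_eta hT hTp t).comp measurable_prodMk_left
  · intro u
    haveI := hTp z.2 u
    exact Measure.isProbabilityMeasure_map (by fun_prop)

lemma measurable_stepK (t : ℕ) : Measurable (stepK T γ t) :=
  measurable_bind_param (hγ.1 t) (hγ.2 t) (measurable_eta hT hTp t)

lemma histMeas_prob (x : X) : ∀ t, IsProbabilityMeasure (histMeas T γ x t)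
  | 0 => by unfold histMeas; infer_instance
  | (t+1) => by
      rw [histMeas_succ]
      haveI := histMeas_prob x t
      exact isProbabilityMeasure_bind _ (measurable_stepK hT hTp hγ t) (stepK_prob hT hTp hγ t)

/-- Key expansion of an integral against the history measure at time `t+1`. -/
lemma integral_hist_succ (x : X) (t : ℕ) {w : ((Fin (t+1) → X × U) × X) → ℝ}
    (hw : Measurable w) {C : ℝ} (h0 : ∀ z, 0 ≤ w z) (hC : ∀ z, w z ≤ C) :
    ∫ z', w z' ∂histMeas T γ x (t+1)
      = ∫ z, (∫ u, (∫ x', w (Fin.snoc z.1 (z.2, u), x') ∂T z.2 u) ∂γ t z)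
          ∂histMeas T γ x t := by
  haveI := histMeas_prob hT hTp hγ x t
  rw [histMeas_succ,
    integral_bind' _ (measurable_stepK hT hTp hγ t) (stepK_prob hT hTp hγ t) hw h0 hC]
  refine integral_congr_ae (Eventually.of_forall fun z => ?_)
  haveI := hγ.2 t z
  show ∫ z', w z' ∂((γ t z).bind _) = _
  rw [integral_bind'
      (κ := fun u => (T z.2 u).map fun x' => ((Fin.snoc z.1 (z.2, u) : Fin (t+1) → X × U), x'))
      _ ((measurable_eta hT hTp t).comp measurable_prodMk_left)
      (fun u => by haveI := hTp z.2 u; exact Measure.isProbabilityMeasure_map (by fun_prop)) hw h0 hC]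
  refine integral_congr_ae (Eventually.of_forall fun u => ?_)
  exact integral_map' (by fun_prop) _ hw

end
end Hist

section Master
variable {X U : Type*} [MeasurableSpace X] [MeasurableSpace U]

lemma isAdmissible_statPolicy {h : X → U} (hh : Measurable h) :
    IsAdmissible (statPolicy (X := X) h) :=
  ⟨fun _ => Measure.measurable_dirac.comp (hh.comp measurable_snd),
   fun _ _ => by unfold statPolicy; infer_instance⟩

lemma measurable_intw {T : X → U → Measure X} (hT : Measurable (Function.uncurry T))
    (hTp : ∀ x u, IsProbabilityMeasure (T x u)) {w : X → ℝ} (hw : Measurable w)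
    (hw0 : ∀ y, 0 ≤ w y) :
    Measurable fun p : X × U => ∫ a, w a ∂T p.1 p.2 :=
  measurable_integral_param (κ := fun p : X × U => T p.1 p.2) hT
    (fun p => hTp _ _) (f := fun _ a => w a) (hw.comp measurable_snd) (fun _ a => hw0 a)

lemma intw_nonneg {T : X → U → Measure X} {w : X → ℝ} (hw0 : ∀ y, 0 ≤ w y) (p : X × U) :
    0 ≤ ∫ a, w a ∂T p.1 p.2 := integral_nonneg hw0

lemma intw_le {T : X → U → Measure X} (hTp : ∀ x u, IsProbabilityMeasure (T x u))
    {w : X → ℝ} (hw : Measurable w) {Cw : ℝ} (hw0 : ∀ y, 0 ≤ w y) (hwC : ∀ y, w y ≤ Cw)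
    (p : X × U) : ∫ a, w a ∂T p.1 p.2 ≤ Cw := by
  haveI := hTp p.1 p.2
  exact integral_le_bound _ hw hw0 hwC

variable {T : X → U → Measure X} {c : X → U → ℝ} {γ : Policy X U} {β : ℝ} {B : ℝ}
  {w : X → ℝ} {Cw : ℝ}

lemma measurable_costInner (hγ : IsAdmissible γ) (hc : Measurable (Function.uncurry c))
    (hc0 : ∀ y u, 0 ≤ c y u) (t : ℕ) :
    Measurable fun z : (Fin t → X × U) × X => ∫ u, c z.2 u ∂γ t z :=
  measurable_integral_param (hγ.1 t) (hγ.2 t) (f := fun z u => c z.2 u)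
    (hc.comp ((measurable_snd.comp measurable_fst).prodMk measurable_snd))
    (fun z u => hc0 _ _)

lemma costInner_nonneg (hc0 : ∀ y u, 0 ≤ c y u) (t : ℕ) (z : (Fin t → X × U) × X) :
    0 ≤ ∫ u, c z.2 u ∂γ t z := integral_nonneg (fun u => hc0 _ _)

lemma costInner_le (hγ : IsAdmissible γ) (hc : Measurable (Function.uncurry c))
    (hc0 : ∀ y u, 0 ≤ c y u) (hcB : ∀ y u, c y u ≤ B) (t : ℕ) (z : (Fin t → X × U) × X) :
    ∫ u, c z.2 u ∂γ t z ≤ B := by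
  haveI := hγ.2 t z
  exact integral_le_bound _ (hc.comp measurable_prodMk_left) (fun u => hc0 _ _)
    (fun u => hcB _ _)

lemma costAt_nonneg' (hc0 : ∀ y u, 0 ≤ c y u) (x : X) (t : ℕ) : 0 ≤ costAt c T γ x t :=
  integral_nonneg (fun z => costInner_nonneg hc0 t z)

lemma costAt_le (hT : Measurable (Function.uncurry T))
    (hTp : ∀ x u, IsProbabilityMeasure (T x u)) (hγ : IsAdmissible γ)
    (hc : Measurable (Function.uncurry c)) (hc0 : ∀ y u, 0 ≤ c y u)
    (hcB : ∀ y u, c y u ≤ B) (x : X) (t : ℕ) : costAt c T γ x t ≤ B := by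
  haveI := histMeas_prob hT hTp hγ x t
  exact integral_le_bound _ (measurable_costInner hγ hc hc0 t)
    (costInner_nonneg hc0 t) (costInner_le hγ hc hc0 hcB t)

/-- The measurable per-(state,action) integrand `c + β ∫ w dT`. -/
lemma measurable_bellInt (hT : Measurable (Function.uncurry T))
    (hTp : ∀ x u, IsProbabilityMeasure (T x u)) (hc : Measurable (Function.uncurry c))
    (hw : Measurable w) (hw0 : ∀ y, 0 ≤ w y) :
    Measurable fun p : X × U => c p.1 p.2 + β * ∫ a, w a ∂T p.1 p.2 :=
  hc.add ((measurable_intw hT hTp hw hw0).const_mul β)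

lemma step_integral (hT : Measurable (Function.uncurry T))
    (hTp : ∀ x u, IsProbabilityMeasure (T x u)) (hγ : IsAdmissible γ)
    (hc : Measurable (Function.uncurry c)) (hc0 : ∀ y u, 0 ≤ c y u)
    (hcB : ∀ y u, c y u ≤ B) (hβ0 : 0 ≤ β)
    (hw : Measurable w) (hw0 : ∀ y, 0 ≤ w y) (hwC : ∀ y, w y ≤ Cw) (x : X) (t : ℕ) :
    ∫ z, (∫ u, (c z.2 u + β * ∫ a, w a ∂T z.2 u) ∂γ t z) ∂histMeas T γ x t
      = costAt c T γ x t + β * ∫ z, w z.2 ∂histMeas T γ x (t+1) := by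
  haveI := histMeas_prob hT hTp hγ x t
  have hIw : Measurable fun p : X × U => ∫ a, w a ∂T p.1 p.2 :=
    measurable_intw hT hTp hw hw0
  have hIw0 : ∀ p : X × U, 0 ≤ ∫ a, w a ∂T p.1 p.2 := intw_nonneg hw0
  have hIwC : ∀ p : X × U, ∫ a, w a ∂T p.1 p.2 ≤ Cw := intw_le hTp hw hw0 hwC
  have hsplit : ∀ z : (Fin t → X × U) × X,
      ∫ u, (c z.2 u + β * ∫ a, w a ∂T z.2 u) ∂γ t z
        = (∫ u, c z.2 u ∂γ t z) + β * ∫ u, (∫ a, w a ∂T z.2 u) ∂γ t z := by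
    intro z
    haveI := hγ.2 t z
    have h1 : Integrable (fun u => c z.2 u) (γ t z) :=
      integrable_of_bound' _ (hc.comp measurable_prodMk_left) (fun u => hc0 _ _)
        (fun u => hcB _ _)
    have h2 : Integrable (fun u : U => ∫ a, w a ∂T z.2 u) (γ t z) :=
      integrable_of_bound' _ (hIw.comp measurable_prodMk_left) (fun u => hIw0 (z.2, u))
        (fun u => hIwC (z.2, u))
    rw [integral_add h1 (h2.const_mul β), integral_const_mul β]
  rw [integral_congr_ae (Eventually.of_forall hsplit)]
  have hB1 : Measurable fun z : (Fin t → X × U) × X => ∫ u, c z.2 u ∂γ t z :=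
    measurable_costInner hγ hc hc0 t
  have hB2 : Measurable fun z : (Fin t → X × U) × X =>
      ∫ u, (∫ a, w a ∂T z.2 u) ∂γ t z :=
    measurable_integral_param (hγ.1 t) (hγ.2 t) (f := fun z u => ∫ a, w a ∂T z.2 u)
      (hIw.comp ((measurable_snd.comp measurable_fst).prodMk measurable_snd))
      (fun z u => integral_nonneg hw0)
  have hint1 : Integrable (fun z : (Fin t → X × U) × X => ∫ u, c z.2 u ∂γ t z)
      (histMeas T γ x t) :=
    integrable_of_bound' _ hB1 (costInner_nonneg hc0 t) (costInner_le hγ hc hc0 hcB t)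
  have hint2 : Integrable (fun z : (Fin t → X × U) × X => ∫ u, (∫ a, w a ∂T z.2 u) ∂γ t z)
      (histMeas T γ x t) := by
    refine integrable_of_bound' (C := Cw) _ hB2 (fun z => integral_nonneg (fun u => integral_nonneg hw0)) ?_
    intro z
    haveI := hγ.2 t z
    exact integral_le_bound _ (hIw.comp measurable_prodMk_left)
      (fun u => intw_nonneg hw0 (z.2, u)) (fun u => intw_le hTp hw hw0 hwC (z.2, u))
  rw [integral_add hint1 (hint2.const_mul β), integral_const_mul β]
  have hcost : ∫ z, (∫ u, c z.2 u ∂γ t z) ∂histMeas T γ x t = costAt c T γ x t := rfl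
  rw [hcost, integral_hist_succ hT hTp hγ x t (w := fun z' => w z'.2) (hw.comp measurable_snd)
      (C := Cw) (fun z => hw0 _) (fun z => hwC _)]

lemma master_le (hT : Measurable (Function.uncurry T))
    (hTp : ∀ x u, IsProbabilityMeasure (T x u)) (hγ : IsAdmissible γ)
    (hc : Measurable (Function.uncurry c)) (hc0 : ∀ y u, 0 ≤ c y u)
    (hcB : ∀ y u, c y u ≤ B) (hβ0 : 0 ≤ β)
    (hw : Measurable w) (hw0 : ∀ y, 0 ≤ w y) (hwC : ∀ y, w y ≤ Cw)
    (hbell : ∀ y u, w y ≤ c y u + β * ∫ a, w a ∂T y u) (x : X) :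
    ∀ n, w x ≤ (∑ t ∈ Finset.range n, β ^ t * costAt c T γ x t)
      + β ^ n * ∫ z, w z.2 ∂histMeas T γ x n := by
  have hIw : Measurable fun p : X × U => ∫ a, w a ∂T p.1 p.2 :=
    measurable_intw hT hTp hw hw0
  have hbi : Measurable fun p : X × U => c p.1 p.2 + β * ∫ a, w a ∂T p.1 p.2 :=
    measurable_bellInt hT hTp hc hw hw0
  have hbi0 : ∀ p : X × U, 0 ≤ c p.1 p.2 + β * ∫ a, w a ∂T p.1 p.2 := fun p => by
    have := intw_nonneg (T := T) hw0 p; have := hc0 p.1 p.2; nlinarith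
  have hbiC : ∀ p : X × U, c p.1 p.2 + β * ∫ a, w a ∂T p.1 p.2 ≤ B + β * Cw := fun p => by
    have := intw_le hTp hw hw0 hwC p; have := hcB p.1 p.2; nlinarith
  intro n
  induction n with
  | zero =>
      have h00 : ∫ z, w z.2 ∂histMeas T γ x 0 = w x := by
        show ∫ z : (Fin 0 → X × U) × X, w z.2 ∂(Measure.dirac ((fun i => i.elim0), x)) = w x
        exact integral_dirac' _ _ (hw.comp measurable_snd).stronglyMeasurable
      simp [h00]
  | succ n ih =>
      have key : ∫ z, w z.2 ∂histMeas T γ x n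
          ≤ costAt c T γ x n + β * ∫ z, w z.2 ∂histMeas T γ x (n+1) := by
        rw [← step_integral hT hTp hγ hc hc0 hcB hβ0 hw hw0 hwC x n]
        haveI := histMeas_prob hT hTp hγ x n
        refine integral_mono (integrable_of_bound' _ (hw.comp measurable_snd)
            (fun z => hw0 _) (fun z => hwC _)) ?_ ?_
        · refine integrable_of_bound' (C := B + β * Cw) _ ?_ ?_ ?_
          · exact measurable_integral_param (hγ.1 n) (hγ.2 n)
              (f := fun z u => c z.2 u + β * ∫ a, w a ∂T z.2 u)
              (hbi.comp ((measurable_snd.comp measurable_fst).prodMk measurable_snd))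
              (fun z u => hbi0 (z.2, u))
          · exact fun z => integral_nonneg fun u => hbi0 (z.2, u)
          · intro z
            haveI := hγ.2 n z
            exact integral_le_bound _ (hbi.comp measurable_prodMk_left)
              (fun u => hbi0 (z.2, u)) (fun u => hbiC (z.2, u))
        · intro z
          show w z.2 ≤ ∫ u, (c z.2 u + β * ∫ a, w a ∂T z.2 u) ∂γ n z
          haveI := hγ.2 n z
          have hconst : w z.2 = ∫ _, w z.2 ∂γ n z := by simp
          rw [hconst]
          exact integral_mono (integrable_const _)
            (integrable_of_bound' _ (hbi.comp measurable_prodMk_left)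
              (fun u => hbi0 (z.2, u)) (fun u => hbiC (z.2, u)))
            (fun u => hbell z.2 u)
      have hpow : (0:ℝ) ≤ β ^ n := pow_nonneg hβ0 n
      have h2 := mul_le_mul_of_nonneg_left key hpow
      rw [Finset.sum_range_succ]
      calc w x ≤ (∑ t ∈ Finset.range n, β ^ t * costAt c T γ x t)
          + β ^ n * ∫ z, w z.2 ∂histMeas T γ x n := ih
        _ ≤ (∑ t ∈ Finset.range n, β ^ t * costAt c T γ x t)
          + β ^ n * (costAt c T γ x n + β * ∫ z, w z.2 ∂histMeas T γ x (n+1)) := by linarith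
        _ = _ := by ring

lemma master_eq {h : X → U} (hT : Measurable (Function.uncurry T))
    (hTp : ∀ x u, IsProbabilityMeasure (T x u)) (hh : Measurable h)
    (hc : Measurable (Function.uncurry c)) (hc0 : ∀ y u, 0 ≤ c y u)
    (hcB : ∀ y u, c y u ≤ B) (hβ0 : 0 ≤ β)
    (hw : Measurable w) (hw0 : ∀ y, 0 ≤ w y) (hwC : ∀ y, w y ≤ Cw)
    (hbell : ∀ y, w y = c y (h y) + β * ∫ a, w a ∂T y (h y)) (x : X) :
    ∀ n, w x = (∑ t ∈ Finset.range n, β ^ t * costAt c T (statPolicy h) x t)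
      + β ^ n * ∫ z, w z.2 ∂histMeas T (statPolicy h) x n := by
  have hγ : IsAdmissible (statPolicy (X := X) h) := isAdmissible_statPolicy hh
  have hIw : Measurable fun p : X × U => ∫ a, w a ∂T p.1 p.2 :=
    measurable_intw hT hTp hw hw0
  have hbi : Measurable fun p : X × U => c p.1 p.2 + β * ∫ a, w a ∂T p.1 p.2 :=
    measurable_bellInt hT hTp hc hw hw0
  intro n
  induction n with
  | zero =>
      have h00 : ∫ z, w z.2 ∂histMeas T (statPolicy h) x 0 = w x := by
        show ∫ z : (Fin 0 → X × U) × X, w z.2 ∂(Measure.dirac ((fun i => i.elim0), x)) = w x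
        exact integral_dirac' _ _ (hw.comp measurable_snd).stronglyMeasurable
      simp [h00]
  | succ n ih =>
      have key : ∫ z, w z.2 ∂histMeas T (statPolicy h) x n
          = costAt c T (statPolicy h) x n
            + β * ∫ z, w z.2 ∂histMeas T (statPolicy h) x (n+1) := by
        rw [← step_integral hT hTp hγ hc hc0 hcB hβ0 hw hw0 hwC x n]
        refine integral_congr_ae (Eventually.of_forall fun z => ?_)
        show w z.2 = ∫ u, (c z.2 u + β * ∫ a, w a ∂T z.2 u) ∂(Measure.dirac (h z.2))
        have hd := integral_dirac' (fun u : U => c z.2 u + β * ∫ a, w a ∂T z.2 u) (h z.2)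
          (Measurable.stronglyMeasurable (hbi.comp measurable_prodMk_left))
        rw [hd]
        exact hbell z.2
      rw [Finset.sum_range_succ, ih, key]
      ring

lemma costAt_stat {h : X → U} (hh : Measurable h) (hc : Measurable (Function.uncurry c))
    (x : X) (t : ℕ) :
    costAt c T (statPolicy h) x t
      = ∫ z, c z.2 (h z.2) ∂histMeas T (statPolicy h) x t := by
  refine integral_congr_ae (Eventually.of_forall fun z => ?_)
  show ∫ u, c z.2 u ∂(Measure.dirac (h z.2)) = c z.2 (h z.2)
  exact integral_dirac' (fun u : U => c z.2 u) (h z.2)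
    (Measurable.stronglyMeasurable (hc.comp measurable_prodMk_left))

end Master

section Bellman
variable {X U : Type*} [MeasurableSpace X] [MetricSpace X] [BorelSpace X]
  [SecondCountableTopology X]
  [MeasurableSpace U] [MetricSpace U] [BorelSpace U] [SecondCountableTopology U]
  [CompactSpace U] [Nonempty U]

/-- Bellman optimality operator. -/
def Lop (β : ℝ) (T : X → U → Measure X) (c : X → U → ℝ) (v : X → ℝ) : X → ℝ :=
  fun x => ⨅ u, (c x u + β * ∫ a, v a ∂T x u)

/-- Value iteration. -/
def vIter (β : ℝ) (T : X → U → Measure X) (c : X → U → ℝ) : ℕ → X → ℝ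
  | 0 => fun _ => 0
  | n + 1 => Lop β T c (vIter β T c n)

/-- Optimal value function (as the limit of value iteration). -/
def vStar (β : ℝ) (T : X → U → Measure X) (c : X → U → ℝ) : X → ℝ :=
  fun x => ⨆ n, vIter β T c n x

/-- Convenient bundled regularity hypotheses. -/
structure Nice (β : ℝ) (T : X → U → Measure X) (c : X → U → ℝ) (B : ℝ) : Prop where
  hT : Measurable (Function.uncurry T)
  hTp : ∀ x u, IsProbabilityMeasure (T x u)
  hcont : Continuous (Function.uncurry c)
  hc0 : ∀ y u, 0 ≤ c y u
  hcB : ∀ y u, c y u ≤ B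
  hB0 : 0 ≤ B
  hwc : ∀ v : X → ℝ, Continuous v → (∃ C, ∀ y, |v y| ≤ C) →
    Continuous fun p : X × U => ∫ y, v y ∂(T p.1 p.2)
  hβ0 : 0 < β
  hβ1 : β < 1

/-- Comparison of two infima. -/
lemma abs_ciInf_sub_ciInf {F G : U → ℝ} (hF0 : ∀ u, 0 ≤ F u) (hG0 : ∀ u, 0 ≤ G u)
    {d : ℝ} (h : ∀ u, |F u - G u| ≤ d) : |(⨅ u, F u) - ⨅ u, G u| ≤ d := by
  have bF : BddBelow (Set.range F) := ⟨0, by rintro _ ⟨u, rfl⟩; exact hF0 u⟩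
  have bG : BddBelow (Set.range G) := ⟨0, by rintro _ ⟨u, rfl⟩; exact hG0 u⟩
  rw [abs_le]
  constructor
  · have h' : ∀ u, (⨅ u, G u) - d ≤ F u := fun u => by
      have h1 := ciInf_le bG u
      have h2 := abs_le.1 (h u)
      linarith
    have := le_ciInf h'
    linarith
  · have h' : ∀ u, (⨅ u, F u) - d ≤ G u := fun u => by
      have h1 := ciInf_le bF u
      have h2 := abs_le.1 (h u)
      linarith
    have := le_ciInf h'
    linarith

/-- Comparison of two integrals of bounded measurable functions. -/
lemma abs_integral_sub_le {μ : Measure X} [IsProbabilityMeasure μ] {v w : X → ℝ}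
    (hv : Measurable v) (hw : Measurable w) {Cv Cw : ℝ}
    (hv0 : ∀ y, 0 ≤ v y) (hvC : ∀ y, v y ≤ Cv) (hw0 : ∀ y, 0 ≤ w y) (hwC : ∀ y, w y ≤ Cw)
    {d : ℝ} (h : ∀ y, |v y - w y| ≤ d) :
    |(∫ a, v a ∂μ) - ∫ a, w a ∂μ| ≤ d := by
  rw [← integral_sub (integrable_of_bound' _ hv hv0 hvC) (integrable_of_bound' _ hw hw0 hwC)]
  have := norm_integral_le_of_norm_le_const (μ := μ) (f := fun a => v a - w a)
    (C := d) (Eventually.of_forall fun a => by simpa using h a)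
  simpa using this

/-- Minimum of a jointly continuous function over a compact `U` is continuous. -/
lemma continuous_inf_compact {Φ : X × U → ℝ} (hΦ : Continuous Φ) :
    Continuous fun x => ⨅ u, Φ (x, u) := by
  have h := IsCompact.continuous_sInf (isCompact_univ (X := U))
    (f := fun (x : X) (u : U) => Φ (x, u)) (by exact hΦ)
  convert h using 2 with x
  rw [Set.image_univ]
  rfl

namespace Nice

variable {β : ℝ} {T : X → U → Measure X} {c : X → U → ℝ} {B : ℝ} (hN : Nice β T c B)
include hN

lemma hc : Measurable (Function.uncurry c) := hN.hcont.measurable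

/-- The sup-norm bound for value functions. -/
def C (_ : Nice β T c B) : ℝ := B / (1 - β)

lemma hC0 : 0 ≤ hN.C := div_nonneg hN.hB0 (by linarith [hN.hβ1])

lemma hBC : B + β * hN.C = hN.C := by
  have h1 : (1:ℝ) - β ≠ 0 := by have := hN.hβ1; intro h; linarith
  show B + β * (B / (1 - β)) = B / (1 - β)
  field_simp
  ring

lemma bddBelow_bell (v : X → ℝ) (hv0 : ∀ y, 0 ≤ v y) (x : X) :
    BddBelow (Set.range fun u => c x u + β * ∫ a, v a ∂T x u) := by
  refine ⟨0, ?_⟩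
  rintro _ ⟨u, rfl⟩
  have h1 := hN.hc0 x u
  have h2 : 0 ≤ ∫ a, v a ∂T x u := integral_nonneg hv0
  have := hN.hβ0.le
  show 0 ≤ c x u + β * ∫ a, v a ∂T x u
  nlinarith

lemma Lop_nonneg {v : X → ℝ} (hv0 : ∀ y, 0 ≤ v y) (x : X) : 0 ≤ Lop β T c v x := by
  refine le_ciInf fun u => ?_
  show 0 ≤ c x u + β * ∫ a, v a ∂T x u
  have h1 := hN.hc0 x u
  have h2 : 0 ≤ ∫ a, v a ∂T x u := integral_nonneg hv0
  have := hN.hβ0.le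
  nlinarith

lemma Lop_le {v : X → ℝ} (hv : Measurable v) {Cv : ℝ} (hv0 : ∀ y, 0 ≤ v y)
    (hvC : ∀ y, v y ≤ Cv) (x : X) : Lop β T c v x ≤ B + β * Cv := by
  obtain ⟨u⟩ := ‹Nonempty U›
  refine le_trans (ciInf_le (hN.bddBelow_bell v hv0 x) u) ?_
  show c x u + β * ∫ a, v a ∂T x u ≤ B + β * Cv
  have h2 : ∫ a, v a ∂T x u ≤ Cv := intw_le hN.hTp hv hv0 hvC (x, u)
  have := hN.hcB x u
  have := hN.hβ0.le
  nlinarith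

lemma Lop_mono {v w : X → ℝ} (hv : Measurable v) (hw : Measurable w)
    {Cv Cw : ℝ} (hv0 : ∀ y, 0 ≤ v y) (hvC : ∀ y, v y ≤ Cv)
    (hw0 : ∀ y, 0 ≤ w y) (hwC : ∀ y, w y ≤ Cw)
    (hvw : ∀ y, v y ≤ w y) (x : X) : Lop β T c v x ≤ Lop β T c w x := by
  refine ciInf_mono (hN.bddBelow_bell v hv0 x) fun u => ?_
  show c x u + β * ∫ a, v a ∂T x u ≤ c x u + β * ∫ a, w a ∂T x u
  have h3 : ∫ a, v a ∂T x u ≤ ∫ a, w a ∂T x u := by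
    haveI := hN.hTp x u
    exact integral_mono (integrable_of_bound' _ hv hv0 hvC)
      (integrable_of_bound' _ hw hw0 hwC) hvw
  have := hN.hβ0.le
  nlinarith

lemma vIter_nonneg : ∀ n y, 0 ≤ vIter β T c n y
  | 0, _ => le_refl 0
  | (n+1), y => hN.Lop_nonneg (fun z => vIter_nonneg n z) y

lemma vIter_cont_le : ∀ n, Continuous (vIter β T c n) ∧ (∀ y, vIter β T c n y ≤ hN.C)
  | 0 => ⟨continuous_const, fun _ => hN.hC0⟩
  | (n+1) => by
      obtain ⟨hcont, hle⟩ := vIter_cont_le n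
      have habs : ∃ C', ∀ y, |vIter β T c n y| ≤ C' :=
        ⟨hN.C, fun y => abs_le.2 ⟨by linarith [hN.vIter_nonneg n y, hN.hC0], hle y⟩⟩
      constructor
      · exact continuous_inf_compact
          (hN.hcont.add (continuous_const.mul (hN.hwc _ hcont habs)))
      · intro y
        have h1 := hN.Lop_le hcont.measurable (fun z => hN.vIter_nonneg n z) hle y
        calc Lop β T c (vIter β T c n) y ≤ B + β * hN.C := h1
          _ = hN.C := hN.hBC

lemma vIter_cont (n : ℕ) : Continuous (vIter β T c n) := (hN.vIter_cont_le n).1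
lemma vIter_meas (n : ℕ) : Measurable (vIter β T c n) := (hN.vIter_cont n).measurable
lemma vIter_le (n : ℕ) (y : X) : vIter β T c n y ≤ hN.C := (hN.vIter_cont_le n).2 y

lemma vIter_mono_succ : ∀ n y, vIter β T c n y ≤ vIter β T c (n+1) y
  | 0, y => hN.Lop_nonneg (fun z => hN.vIter_nonneg 0 z) y
  | (n+1), y =>
      hN.Lop_mono (hN.vIter_meas n) (hN.vIter_meas (n+1))
        (fun z => hN.vIter_nonneg n z) (hN.vIter_le n)
        (fun z => hN.vIter_nonneg (n+1) z) (hN.vIter_le (n+1))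
        (fun z => vIter_mono_succ n z) y

lemma vIter_mono {m n : ℕ} (hmn : m ≤ n) (y : X) : vIter β T c m y ≤ vIter β T c n y := by
  induction n with
  | zero => simp_all
  | succ n ih =>
      rcases Nat.lt_or_ge m (n+1) with h | h
      · exact le_trans (ih (Nat.lt_succ_iff.1 h)) (hN.vIter_mono_succ n y)
      · have : m = n + 1 := le_antisymm hmn h
        simp [this]

/-- Key contraction estimate for the Bellman operator. -/
lemma Lop_abs_le {v w : X → ℝ} (hv : Measurable v) (hw : Measurable w) {Cv Cw : ℝ}
    (hv0 : ∀ y, 0 ≤ v y) (hvC : ∀ y, v y ≤ Cv) (hw0 : ∀ y, 0 ≤ w y) (hwC : ∀ y, w y ≤ Cw)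
    {d : ℝ} (h : ∀ y, |v y - w y| ≤ d) (x : X) :
    |Lop β T c v x - Lop β T c w x| ≤ β * d := by
  refine abs_ciInf_sub_ciInf ?_ ?_ fun u => ?_
  · intro u
    have h1 := hN.hc0 x u
    have h2 : 0 ≤ ∫ a, v a ∂T x u := integral_nonneg hv0
    have := hN.hβ0.le; nlinarith
  · intro u
    have h1 := hN.hc0 x u
    have h2 : 0 ≤ ∫ a, w a ∂T x u := integral_nonneg hw0
    have := hN.hβ0.le; nlinarith
  · haveI := hN.hTp x u
    have h4 := abs_integral_sub_le (μ := T x u) hv hw hv0 hvC hw0 hwC h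
    have hb := hN.hβ0.le
    have heq : (c x u + β * ∫ a, v a ∂T x u) - (c x u + β * ∫ a, w a ∂T x u)
        = β * ((∫ a, v a ∂T x u) - ∫ a, w a ∂T x u) := by ring
    rw [heq, abs_mul, abs_of_nonneg hb]
    exact mul_le_mul_of_nonneg_left h4 hb

lemma vIter_incr : ∀ n y, |vIter β T c (n+1) y - vIter β T c n y| ≤ β ^ n * B
  | 0, y => by
      have h1 := hN.Lop_nonneg (v := vIter β T c 0) (fun _ => le_refl 0) y
      have h2 : Lop β T c (vIter β T c 0) y ≤ B + β * 0 :=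
        hN.Lop_le (v := vIter β T c 0) measurable_const (Cv := 0)
          (fun _ => le_refl 0) (fun _ => le_refl 0) y
      show |Lop β T c (vIter β T c 0) y - vIter β T c 0 y| ≤ β ^ 0 * B
      have h0 : vIter β T c 0 y = 0 := rfl
      rw [pow_zero, one_mul, h0, sub_zero, abs_of_nonneg h1]
      linarith
  | (n+1), y => by
      have h5 := hN.Lop_abs_le (hN.vIter_meas (n+1)) (hN.vIter_meas n)
        (fun z => hN.vIter_nonneg (n+1) z) (hN.vIter_le (n+1))
        (fun z => hN.vIter_nonneg n z) (hN.vIter_le n)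
        (fun z => vIter_incr n z) y
      show |Lop β T c (vIter β T c (n+1)) y - Lop β T c (vIter β T c n) y| ≤ β ^ (n+1) * B
      calc |Lop β T c (vIter β T c (n+1)) y - Lop β T c (vIter β T c n) y|
          ≤ β * (β ^ n * B) := h5
        _ = β ^ (n+1) * B := by ring

lemma vStar_bddAbove (x : X) : BddAbove (Set.range fun n => vIter β T c n x) :=
  ⟨hN.C, by rintro _ ⟨n, rfl⟩; exact hN.vIter_le n x⟩

lemma vIter_le_vStar (n : ℕ) (x : X) : vIter β T c n x ≤ vStar β T c x :=
  le_ciSup (hN.vStar_bddAbove x) n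

lemma vStar_nonneg (x : X) : 0 ≤ vStar β T c x :=
  le_trans (hN.vIter_nonneg 0 x) (hN.vIter_le_vStar 0 x)

lemma vStar_le (x : X) : vStar β T c x ≤ hN.C :=
  ciSup_le fun n => hN.vIter_le n x

/-- Uniform geometric tail bound. -/
lemma vStar_tail (n : ℕ) (x : X) :
    vStar β T c x - vIter β T c n x ≤ β ^ n * B / (1 - β) := by
  have h1β : (0:ℝ) < 1 - β := by linarith [hN.hβ1]
  have hb0 := hN.hβ0.le
  have hbn : (0:ℝ) ≤ β ^ n := pow_nonneg hb0 n
  have key : ∀ k, vIter β T c (n + k) x ≤ vIter β T c n x + β ^ n * B * (1 - β ^ k) / (1 - β) := by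
    intro k
    induction k with
    | zero => simp
    | succ k ih =>
        have hincr := abs_le.1 (hN.vIter_incr (n + k) x)
        have hstep : vIter β T c (n + (k+1)) x ≤ vIter β T c (n+k) x + β ^ (n+k) * B := by
          have h6 := hincr.2
          have heq : n + (k+1) = (n + k) + 1 := by ring
          rw [heq]
          linarith
        refine le_trans hstep ?_
        have hexp : β ^ (n+k) = β ^ n * β ^ k := pow_add β n k
        rw [hexp]
        have halg : β ^ n * B * (1 - β ^ k) / (1 - β) + β ^ n * β ^ k * B
            = β ^ n * B * (1 - β ^ (k+1)) / (1 - β) := by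
          field_simp
          ring
        linarith [ih]
  have hall : ∀ m, vIter β T c m x ≤ vIter β T c n x + β ^ n * B / (1 - β) := by
    intro m
    rcases Nat.le_total m n with h | h
    · have h7 := hN.vIter_mono h x
      have hpos : 0 ≤ β ^ n * B / (1 - β) := div_nonneg (mul_nonneg hbn hN.hB0) h1β.le
      linarith
    · obtain ⟨k, rfl⟩ := Nat.exists_eq_add_of_le h
      refine le_trans (key k) ?_
      have hk : (0:ℝ) ≤ β ^ k := pow_nonneg hb0 k
      have h8 : β ^ n * B * (1 - β ^ k) ≤ β ^ n * B * 1 := by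
        have : 0 ≤ β ^ n * B := mul_nonneg hbn hN.hB0
        nlinarith
      have h9 : β ^ n * B * (1 - β ^ k) / (1 - β) ≤ β ^ n * B / (1 - β) := by
        rw [div_le_div_iff_of_pos_right h1β]
        linarith
      linarith
  have h10 := ciSup_le hall
  show (⨆ n, vIter β T c n x) - vIter β T c n x ≤ _
  linarith [h10]

end Nice
end Bellman

section Bellman2
variable {X U : Type*} [MeasurableSpace X] [MetricSpace X] [BorelSpace X]
  [SecondCountableTopology X]
  [MeasurableSpace U] [MetricSpace U] [BorelSpace U] [SecondCountableTopology U]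
  [CompactSpace U] [Nonempty U]

lemma tendsto_geom_aux {β : ℝ} (hb0 : 0 ≤ β) (hβ1 : β < 1) (Cc : ℝ) :
    Tendsto (fun n => β ^ n * Cc) atTop (nhds 0) := by
  simpa using (tendsto_pow_atTop_nhds_zero_of_lt_one hb0 hβ1).mul_const Cc

lemma le_of_tendsto_bound {a b : ℝ} {e : ℕ → ℝ} (he : Tendsto e atTop (nhds 0))
    (h : ∀ n, a ≤ b + e n) : a ≤ b := by
  have h2 : Tendsto (fun n => b + e n) atTop (nhds b) := by
    simpa using tendsto_const_nhds.add he
  exact ge_of_tendsto' h2 h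

namespace Nice
variable {β : ℝ} {T : X → U → Measure X} {c : X → U → ℝ} {B : ℝ} (hN : Nice β T c B)
include hN

lemma eps_tendsto : Tendsto (fun n => β ^ n * B / (1 - β)) atTop (nhds 0) := by
  have := tendsto_geom_aux hN.hβ0.le hN.hβ1 (B / (1 - β))
  refine this.congr fun n => ?_
  rw [mul_div_assoc]

lemma vStar_abs_tail (n : ℕ) (y : X) :
    |vStar β T c y - vIter β T c n y| ≤ β ^ n * B / (1 - β) := by
  rw [abs_of_nonneg (by linarith [hN.vIter_le_vStar n y])]
  exact hN.vStar_tail n y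

lemma vStar_cont : Continuous (vStar β T c) := by
  have h : TendstoUniformly (fun n x => vIter β T c n x) (vStar β T c) atTop := by
    rw [Metric.tendstoUniformly_iff]
    intro ε hε
    have hto := hN.eps_tendsto
    have hev : ∀ᶠ n in atTop, dist (β ^ n * B / (1 - β)) 0 < ε :=
      (Metric.tendsto_nhds.mp hto) ε hε
    filter_upwards [hev] with n hn x
    have h1 := hN.vStar_abs_tail n x
    rw [Real.dist_eq, sub_zero] at hn
    have h2 : |β ^ n * B / (1 - β)| < ε := hn
    rw [Real.dist_eq]
    calc |vStar β T c x - vIter β T c n x| ≤ β ^ n * B / (1 - β) := h1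
      _ ≤ |β ^ n * B / (1 - β)| := le_abs_self _
      _ < ε := h2
  exact h.continuous (Eventually.of_forall fun n => hN.vIter_cont n).frequently

lemma vStar_meas : Measurable (vStar β T c) := hN.vStar_cont.measurable

lemma vStar_fixed (x : X) : Lop β T c (vStar β T c) x = vStar β T c x := by
  have key : ∀ n : ℕ, |Lop β T c (vStar β T c) x - vStar β T c x|
      ≤ 0 + 2 * (β ^ n * B / (1 - β)) := by
    intro n
    have e1 : ∀ y, |vStar β T c y - vIter β T c n y| ≤ β ^ n * B / (1 - β) :=
      fun y => hN.vStar_abs_tail n y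
    have h2 : |Lop β T c (vStar β T c) x - Lop β T c (vIter β T c n) x|
        ≤ β * (β ^ n * B / (1 - β)) :=
      hN.Lop_abs_le hN.vStar_meas (hN.vIter_meas n) (fun y => hN.vStar_nonneg y)
        (fun y => hN.vStar_le y) (fun y => hN.vIter_nonneg n y) (hN.vIter_le n) e1 x
    have h3 : |Lop β T c (vIter β T c n) x - vStar β T c x| ≤ β ^ (n+1) * B / (1 - β) := by
      have := hN.vStar_abs_tail (n+1) x
      have heq : vIter β T c (n+1) x = Lop β T c (vIter β T c n) x := rfl
      rw [← heq]
      rw [abs_sub_comm]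
      exact this
    have htri := abs_sub_le (Lop β T c (vStar β T c) x) (Lop β T c (vIter β T c n) x)
      (vStar β T c x)
    have hb0 := hN.hβ0.le
    have hb1 := hN.hβ1
    have h1β : (0:ℝ) < 1 - β := by linarith
    have hbn : (0:ℝ) ≤ β ^ n := pow_nonneg hb0 n
    have hpow : β ^ (n+1) * B / (1 - β) ≤ β ^ n * B / (1 - β) := by
      rw [div_le_div_iff_of_pos_right h1β]
      have : β ^ (n+1) ≤ β ^ n := by
        calc β ^ (n+1) = β ^ n * β := by ring
          _ ≤ β ^ n * 1 := by nlinarith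
          _ = β ^ n := by ring
      nlinarith [hN.hB0]
    have hβle : β * (β ^ n * B / (1 - β)) ≤ β ^ n * B / (1 - β) := by
      have h0' : 0 ≤ β ^ n * B / (1 - β) := div_nonneg (mul_nonneg hbn hN.hB0) h1β.le
      nlinarith
    linarith
  have habs : |Lop β T c (vStar β T c) x - vStar β T c x| ≤ 0 := by
    refine le_of_tendsto_bound ?_ key
    have := hN.eps_tendsto
    simpa using this.const_mul 2
  have := abs_nonneg (Lop β T c (vStar β T c) x - vStar β T c x)
  have : |Lop β T c (vStar β T c) x - vStar β T c x| = 0 := le_antisymm habs this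
  have := abs_eq_zero.mp this
  linarith [sub_eq_zero.mp this]

end Nice

/-- Transport of Lipschitz bounds through a Wasserstein-Lipschitz kernel. -/
lemma lip_integral {T : X → U → Measure X} {KT : ℝ≥0} (hKT : KernelLipschitz T KT)
    (hTp : ∀ x u, IsProbabilityMeasure (T x u))
    {K : ℝ≥0} {v : X → ℝ} (hv : LipschitzWith K v) (u : U) (x y : X) :
    |(∫ a, v a ∂T x u) - ∫ a, v a ∂T y u| ≤ (K : ℝ) * KT * dist x y := by
  rcases eq_or_ne K 0 with h0 | h0
  · have hconst : ∀ a : X, v a = v x := fun a => by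
      have := hv.dist_le_mul a x
      rw [h0] at this
      simp only [NNReal.coe_zero, zero_mul] at this
      exact dist_le_zero.mp this
    have hint : ∀ z : X, ∫ a, v a ∂T z u = v x := by
      intro z
      haveI := hTp z u
      rw [integral_congr_ae (Eventually.of_forall hconst)]
      simp
    rw [hint x, hint y, h0]
    simp
  · have hKpos : (0:ℝ) < K := by
      have := (zero_le (a := K)).lt_of_ne (Ne.symm h0)
      exact_mod_cast this
    set f : X → ℝ := fun a => (K:ℝ)⁻¹ * v a with hf_def
    have hf : LipschitzWith 1 f := by
      refine LipschitzWith.of_dist_le_mul fun a b => ?_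
      have h1 := hv.dist_le_mul a b
      rw [Real.dist_eq] at h1 ⊢
      have : f a - f b = (K:ℝ)⁻¹ * (v a - v b) := by rw [hf_def]; ring
      rw [this, abs_mul, abs_of_nonneg (by positivity : (0:ℝ) ≤ (K:ℝ)⁻¹)]
      rw [NNReal.coe_one, one_mul]
      calc (K:ℝ)⁻¹ * |v a - v b| ≤ (K:ℝ)⁻¹ * ((K:ℝ) * dist a b) := by
            have : |v a - v b| ≤ (K:ℝ) * dist a b := by
              simpa [Real.dist_eq] using h1
            nlinarith [inv_nonneg.mpr hKpos.le]
        _ = dist a b := by field_simp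
    have hKT' := hKT f hf u x y
    have hix : ∫ a, f a ∂T x u = (K:ℝ)⁻¹ * ∫ a, v a ∂T x u := integral_const_mul _ _
    have hiy : ∫ a, f a ∂T y u = (K:ℝ)⁻¹ * ∫ a, v a ∂T y u := integral_const_mul _ _
    rw [hix, hiy] at hKT'
    have heq : (K:ℝ)⁻¹ * (∫ a, v a ∂T x u) - (K:ℝ)⁻¹ * ∫ a, v a ∂T y u
        = (K:ℝ)⁻¹ * ((∫ a, v a ∂T x u) - ∫ a, v a ∂T y u) := by ring
    rw [heq, abs_mul, abs_of_nonneg (by positivity : (0:ℝ) ≤ (K:ℝ)⁻¹)] at hKT'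
    have := mul_le_mul_of_nonneg_left hKT' hKpos.le
    rw [← mul_assoc, mul_inv_cancel₀ (ne_of_gt hKpos), one_mul] at this
    calc |(∫ a, v a ∂T x u) - ∫ a, v a ∂T y u| ≤ (K:ℝ) * ((KT:ℝ) * dist x y) := this
      _ = (K:ℝ) * KT * dist x y := by ring

namespace Nice
variable {β : ℝ} {T : X → U → Measure X} {c : X → U → ℝ} {B : ℝ} (hN : Nice β T c B)
include hN

lemma vIter_lip {Kc KT Kstar : ℝ≥0} (hKc : CostLipschitz c Kc) (hKT : KernelLipschitz T KT)
    (hKs : (Kc:ℝ) + β * KT * Kstar ≤ (Kstar:ℝ)) :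
    ∀ n, LipschitzWith Kstar (vIter β T c n)
  | 0 => by
      have h := LipschitzWith.const (α := X) (b := (0:ℝ))
      exact h.weaken (zero_le (a := Kstar))
  | (n+1) => by
      have ihl := vIter_lip hKc hKT hKs n
      refine LipschitzWith.of_dist_le_mul fun x y => ?_
      rw [Real.dist_eq]
      show |Lop β T c (vIter β T c n) x - Lop β T c (vIter β T c n) y| ≤ _
      refine le_trans (abs_ciInf_sub_ciInf ?_ ?_ (d := (Kstar:ℝ) * dist x y) fun u => ?_) ?_
      · intro u
        have h1 := hN.hc0 x u
        have h2 : 0 ≤ ∫ a, vIter β T c n a ∂T x u :=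
          integral_nonneg fun z => hN.vIter_nonneg n z
        have := hN.hβ0.le; nlinarith
      · intro u
        have h1 := hN.hc0 y u
        have h2 : 0 ≤ ∫ a, vIter β T c n a ∂T y u :=
          integral_nonneg fun z => hN.vIter_nonneg n z
        have := hN.hβ0.le; nlinarith
      · have hcost : |c x u - c y u| ≤ (Kc:ℝ) * dist x y := by
          have := (hKc u).dist_le_mul x y
          simpa [Real.dist_eq] using this
        have hker := lip_integral hKT hN.hTp ihl u x y
        have hb := hN.hβ0.le
        have heq : (c x u + β * ∫ a, vIter β T c n a ∂T x u)
            - (c y u + β * ∫ a, vIter β T c n a ∂T y u)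
            = (c x u - c y u) + β * ((∫ a, vIter β T c n a ∂T x u)
              - ∫ a, vIter β T c n a ∂T y u) := by ring
        calc |(c x u + β * ∫ a, vIter β T c n a ∂T x u)
            - (c y u + β * ∫ a, vIter β T c n a ∂T y u)|
            ≤ |c x u - c y u| + β * |(∫ a, vIter β T c n a ∂T x u)
              - ∫ a, vIter β T c n a ∂T y u| := by
              rw [heq]
              refine le_trans (abs_add_le _ _) ?_
              rw [abs_mul, abs_of_nonneg hb]
          _ ≤ (Kc:ℝ) * dist x y + β * ((Kstar:ℝ) * KT * dist x y) := by
              have := mul_le_mul_of_nonneg_left hker hb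
              linarith
          _ ≤ (Kstar:ℝ) * dist x y := by nlinarith [dist_nonneg (x := x) (y := y)]
      · exact le_refl _

lemma vStar_lip {Kc KT Kstar : ℝ≥0} (hKc : CostLipschitz c Kc) (hKT : KernelLipschitz T KT)
    (hKs : (Kc:ℝ) + β * KT * Kstar ≤ (Kstar:ℝ)) :
    LipschitzWith Kstar (vStar β T c) := by
  refine LipschitzWith.of_dist_le_mul fun x y => ?_
  rw [Real.dist_eq]
  have key : ∀ n : ℕ, |vStar β T c x - vStar β T c y|
      ≤ (Kstar:ℝ) * dist x y + 2 * (β ^ n * B / (1 - β)) := by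
    intro n
    have h1 := hN.vStar_abs_tail n x
    have h2 := hN.vStar_abs_tail n y
    have h3 : |vIter β T c n x - vIter β T c n y| ≤ (Kstar:ℝ) * dist x y := by
      have := (hN.vIter_lip hKc hKT hKs n).dist_le_mul x y
      simpa [Real.dist_eq] using this
    have htri : |vStar β T c x - vStar β T c y|
        ≤ |vStar β T c x - vIter β T c n x| + |vIter β T c n x - vIter β T c n y|
          + |vIter β T c n y - vStar β T c y| := by
      have t1 := abs_sub_le (vStar β T c x) (vIter β T c n x) (vStar β T c y)
      have t2 := abs_sub_le (vIter β T c n x) (vIter β T c n y) (vStar β T c y)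
      linarith
    rw [abs_sub_comm (vIter β T c n y)] at htri
    linarith
  refine le_of_tendsto_bound ?_ key
  have := hN.eps_tendsto
  simpa using this.const_mul 2

end Nice
end Bellman2

section Pol
variable {X U : Type*} [MeasurableSpace X] [MetricSpace X] [BorelSpace X]
  [SecondCountableTopology X]
  [MeasurableSpace U] [MetricSpace U] [BorelSpace U] [SecondCountableTopology U]
  [CompactSpace U] [Nonempty U]

/-- Policy evaluation operator for a stationary deterministic policy. -/
def Lpol (β : ℝ) (T : X → U → Measure X) (c : X → U → ℝ) (h : X → U) (v : X → ℝ) : X → ℝ :=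
  fun x => c x (h x) + β * ∫ a, v a ∂T x (h x)

def wIter (β : ℝ) (T : X → U → Measure X) (c : X → U → ℝ) (h : X → U) : ℕ → X → ℝ
  | 0 => fun _ => 0
  | n + 1 => Lpol β T c h (wIter β T c h n)

def wStar (β : ℝ) (T : X → U → Measure X) (c : X → U → ℝ) (h : X → U) : X → ℝ :=
  fun x => ⨆ n, wIter β T c h n x

namespace Nice
variable {β : ℝ} {T : X → U → Measure X} {c : X → U → ℝ} {B : ℝ} {h : X → U}
  (hN : Nice β T c B) (hh : Measurable h)
include hN hh

lemma Lpol_nonneg {v : X → ℝ} (hv0 : ∀ y, 0 ≤ v y) (x : X) : 0 ≤ Lpol β T c h v x := by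
  have h1 := hN.hc0 x (h x)
  have h2 : 0 ≤ ∫ a, v a ∂T x (h x) := integral_nonneg hv0
  have := hN.hβ0.le
  show 0 ≤ c x (h x) + β * ∫ a, v a ∂T x (h x)
  nlinarith

lemma Lpol_le {v : X → ℝ} (hv : Measurable v) {Cv : ℝ} (hv0 : ∀ y, 0 ≤ v y)
    (hvC : ∀ y, v y ≤ Cv) (x : X) : Lpol β T c h v x ≤ B + β * Cv := by
  have h2 : ∫ a, v a ∂T x (h x) ≤ Cv := intw_le hN.hTp hv hv0 hvC (x, h x)
  have := hN.hcB x (h x)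
  have := hN.hβ0.le
  show c x (h x) + β * ∫ a, v a ∂T x (h x) ≤ B + β * Cv
  nlinarith

lemma Lpol_meas {v : X → ℝ} (hv : Measurable v) (hv0 : ∀ y, 0 ≤ v y) :
    Measurable (Lpol β T c h v) := by
  have h1 : Measurable fun x => c x (h x) :=
    hN.hc.comp (measurable_id.prodMk hh)
  have h2 : Measurable fun x => ∫ a, v a ∂T x (h x) :=
    (measurable_intw hN.hT hN.hTp hv hv0).comp (measurable_id.prodMk hh)
  exact h1.add (h2.const_mul β)

lemma Lpol_mono {v w : X → ℝ} (hv : Measurable v) (hw : Measurable w)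
    {Cv Cw : ℝ} (hv0 : ∀ y, 0 ≤ v y) (hvC : ∀ y, v y ≤ Cv)
    (hw0 : ∀ y, 0 ≤ w y) (hwC : ∀ y, w y ≤ Cw)
    (hvw : ∀ y, v y ≤ w y) (x : X) : Lpol β T c h v x ≤ Lpol β T c h w x := by
  show c x (h x) + β * ∫ a, v a ∂T x (h x) ≤ c x (h x) + β * ∫ a, w a ∂T x (h x)
  have h3 : ∫ a, v a ∂T x (h x) ≤ ∫ a, w a ∂T x (h x) := by
    haveI := hN.hTp x (h x)
    exact integral_mono (integrable_of_bound' _ hv hv0 hvC)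
      (integrable_of_bound' _ hw hw0 hwC) hvw
  have := hN.hβ0.le
  nlinarith

lemma Lpol_abs_le {v w : X → ℝ} (hv : Measurable v) (hw : Measurable w) {Cv Cw : ℝ}
    (hv0 : ∀ y, 0 ≤ v y) (hvC : ∀ y, v y ≤ Cv) (hw0 : ∀ y, 0 ≤ w y) (hwC : ∀ y, w y ≤ Cw)
    {d : ℝ} (hd : ∀ y, |v y - w y| ≤ d) (x : X) :
    |Lpol β T c h v x - Lpol β T c h w x| ≤ β * d := by
  haveI := hN.hTp x (h x)
  have h4 := abs_integral_sub_le (μ := T x (h x)) hv hw hv0 hvC hw0 hwC hd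
  have hb := hN.hβ0.le
  show |(c x (h x) + β * ∫ a, v a ∂T x (h x)) - (c x (h x) + β * ∫ a, w a ∂T x (h x))| ≤ β * d
  have heq : (c x (h x) + β * ∫ a, v a ∂T x (h x)) - (c x (h x) + β * ∫ a, w a ∂T x (h x))
      = β * ((∫ a, v a ∂T x (h x)) - ∫ a, w a ∂T x (h x)) := by ring
  rw [heq, abs_mul, abs_of_nonneg hb]
  exact mul_le_mul_of_nonneg_left h4 hb

lemma Lpol_shift {v : X → ℝ} (hv : Measurable v) {Cv : ℝ} (hv0 : ∀ y, 0 ≤ v y)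
    (hvC : ∀ y, v y ≤ Cv) (k : ℝ) (x : X) :
    Lpol β T c h (fun y => v y + k) x = Lpol β T c h v x + β * k := by
  haveI := hN.hTp x (h x)
  show c x (h x) + β * ∫ a, (v a + k) ∂T x (h x) = (c x (h x) + β * ∫ a, v a ∂T x (h x)) + β * k
  rw [integral_add (integrable_of_bound' _ hv hv0 hvC) (integrable_const k)]
  simp
  ring

lemma wIter_nonneg : ∀ n y, 0 ≤ wIter β T c h n y
  | 0, _ => le_refl 0
  | (n+1), y => hN.Lpol_nonneg hh (fun z => wIter_nonneg n z) y

lemma wIter_meas_le : ∀ n, Measurable (wIter β T c h n) ∧ (∀ y, wIter β T c h n y ≤ hN.C)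
  | 0 => ⟨measurable_const, fun _ => hN.hC0⟩
  | (n+1) => by
      obtain ⟨hm, hle⟩ := wIter_meas_le n
      refine ⟨hN.Lpol_meas hh hm (fun z => hN.wIter_nonneg hh n z), fun y => ?_⟩
      have h1 := hN.Lpol_le hh hm (fun z => hN.wIter_nonneg hh n z) hle y
      calc Lpol β T c h (wIter β T c h n) y ≤ B + β * hN.C := h1
        _ = hN.C := hN.hBC

lemma wIter_meas (n : ℕ) : Measurable (wIter β T c h n) := (hN.wIter_meas_le hh n).1
lemma wIter_le (n : ℕ) (y : X) : wIter β T c h n y ≤ hN.C := (hN.wIter_meas_le hh n).2 y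

lemma wIter_mono_succ : ∀ n y, wIter β T c h n y ≤ wIter β T c h (n+1) y
  | 0, y => hN.Lpol_nonneg hh (fun z => hN.wIter_nonneg hh 0 z) y
  | (n+1), y =>
      hN.Lpol_mono hh (hN.wIter_meas hh n) (hN.wIter_meas hh (n+1))
        (fun z => hN.wIter_nonneg hh n z) (hN.wIter_le hh n)
        (fun z => hN.wIter_nonneg hh (n+1) z) (hN.wIter_le hh (n+1))
        (fun z => wIter_mono_succ n z) y

lemma wIter_incr : ∀ n y, |wIter β T c h (n+1) y - wIter β T c h n y| ≤ β ^ n * B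
  | 0, y => by
      have h1 := hN.Lpol_nonneg hh (v := wIter β T c h 0) (fun _ => le_refl 0) y
      have h2 : Lpol β T c h (wIter β T c h 0) y ≤ B + β * 0 :=
        hN.Lpol_le hh (v := wIter β T c h 0) measurable_const (Cv := 0)
          (fun _ => le_refl 0) (fun _ => le_refl 0) y
      show |Lpol β T c h (wIter β T c h 0) y - wIter β T c h 0 y| ≤ β ^ 0 * B
      have h0 : wIter β T c h 0 y = 0 := rfl
      rw [pow_zero, one_mul, h0, sub_zero, abs_of_nonneg h1]
      linarith
  | (n+1), y => by
      have h5 := hN.Lpol_abs_le hh (hN.wIter_meas hh (n+1)) (hN.wIter_meas hh n)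
        (fun z => hN.wIter_nonneg hh (n+1) z) (hN.wIter_le hh (n+1))
        (fun z => hN.wIter_nonneg hh n z) (hN.wIter_le hh n)
        (fun z => wIter_incr n z) y
      show |Lpol β T c h (wIter β T c h (n+1)) y - Lpol β T c h (wIter β T c h n) y|
        ≤ β ^ (n+1) * B
      calc |Lpol β T c h (wIter β T c h (n+1)) y - Lpol β T c h (wIter β T c h n) y|
          ≤ β * (β ^ n * B) := h5
        _ = β ^ (n+1) * B := by ring

lemma wStar_bddAbove (x : X) : BddAbove (Set.range fun n => wIter β T c h n x) :=
  ⟨hN.C, by rintro _ ⟨n, rfl⟩; exact hN.wIter_le hh n x⟩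

lemma wIter_le_wStar (n : ℕ) (x : X) : wIter β T c h n x ≤ wStar β T c h x :=
  le_ciSup (hN.wStar_bddAbove hh x) n

lemma wStar_nonneg (x : X) : 0 ≤ wStar β T c h x :=
  le_trans (hN.wIter_nonneg hh 0 x) (hN.wIter_le_wStar hh 0 x)

lemma wStar_le (x : X) : wStar β T c h x ≤ hN.C :=
  ciSup_le fun n => hN.wIter_le hh n x

lemma wIter_mono {m n : ℕ} (hmn : m ≤ n) (y : X) :
    wIter β T c h m y ≤ wIter β T c h n y := by
  induction n with
  | zero => simp_all
  | succ n ih =>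
      rcases Nat.lt_or_ge m (n+1) with hlt | hge
      · exact le_trans (ih (Nat.lt_succ_iff.1 hlt)) (hN.wIter_mono_succ hh n y)
      · have : m = n + 1 := le_antisymm hmn hge
        simp [this]

lemma wStar_tail (n : ℕ) (x : X) :
    wStar β T c h x - wIter β T c h n x ≤ β ^ n * B / (1 - β) := by
  have h1β : (0:ℝ) < 1 - β := by linarith [hN.hβ1]
  have hb0 := hN.hβ0.le
  have hbn : (0:ℝ) ≤ β ^ n := pow_nonneg hb0 n
  have key : ∀ k, wIter β T c h (n + k) x
      ≤ wIter β T c h n x + β ^ n * B * (1 - β ^ k) / (1 - β) := by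
    intro k
    induction k with
    | zero => simp
    | succ k ih =>
        have hincr := abs_le.1 (hN.wIter_incr hh (n + k) x)
        have hstep : wIter β T c h (n + (k+1)) x
            ≤ wIter β T c h (n+k) x + β ^ (n+k) * B := by
          have h6 := hincr.2
          have heq : n + (k+1) = (n + k) + 1 := by ring
          rw [heq]
          linarith
        refine le_trans hstep ?_
        rw [pow_add β n k]
        have halg : β ^ n * B * (1 - β ^ k) / (1 - β) + β ^ n * β ^ k * B
            = β ^ n * B * (1 - β ^ (k+1)) / (1 - β) := by
          field_simp
          ring
        linarith [ih]
  have hall : ∀ m, wIter β T c h m x ≤ wIter β T c h n x + β ^ n * B / (1 - β) := by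
    intro m
    rcases Nat.le_total m n with hle | hle
    · have h7 := hN.wIter_mono hh hle x
      have hpos : 0 ≤ β ^ n * B / (1 - β) := div_nonneg (mul_nonneg hbn hN.hB0) h1β.le
      linarith
    · obtain ⟨k, rfl⟩ := Nat.exists_eq_add_of_le hle
      refine le_trans (key k) ?_
      have hk : (0:ℝ) ≤ β ^ k := pow_nonneg hb0 k
      have h8 : β ^ n * B * (1 - β ^ k) ≤ β ^ n * B * 1 := by
        have : 0 ≤ β ^ n * B := mul_nonneg hbn hN.hB0
        nlinarith
      have h9 : β ^ n * B * (1 - β ^ k) / (1 - β) ≤ β ^ n * B / (1 - β) := by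
        rw [div_le_div_iff_of_pos_right h1β]
        linarith
      linarith
  have h10 := ciSup_le hall
  show (⨆ n, wIter β T c h n x) - wIter β T c h n x ≤ _
  linarith [h10]

lemma wStar_abs_tail (n : ℕ) (y : X) :
    |wStar β T c h y - wIter β T c h n y| ≤ β ^ n * B / (1 - β) := by
  rw [abs_of_nonneg (by linarith [hN.wIter_le_wStar hh n y])]
  exact hN.wStar_tail hh n y

lemma wStar_meas : Measurable (wStar β T c h) := by
  have htend : ∀ x, Tendsto (fun n => wIter β T c h n x) atTop (nhds (wStar β T c h x)) := by
    intro x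
    exact tendsto_atTop_ciSup (fun m n hmn => hN.wIter_mono hh hmn x) (hN.wStar_bddAbove hh x)
  exact measurable_of_tendsto_metrizable (fun n => hN.wIter_meas hh n)
    (tendsto_pi_nhds.2 htend)

lemma wStar_fixed (x : X) : Lpol β T c h (wStar β T c h) x = wStar β T c h x := by
  have key : ∀ n : ℕ, |Lpol β T c h (wStar β T c h) x - wStar β T c h x|
      ≤ 0 + 2 * (β ^ n * B / (1 - β)) := by
    intro n
    have e1 : ∀ y, |wStar β T c h y - wIter β T c h n y| ≤ β ^ n * B / (1 - β) :=
      fun y => hN.wStar_abs_tail hh n y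
    have h2 : |Lpol β T c h (wStar β T c h) x - Lpol β T c h (wIter β T c h n) x|
        ≤ β * (β ^ n * B / (1 - β)) :=
      hN.Lpol_abs_le hh (hN.wStar_meas hh) (hN.wIter_meas hh n)
        (fun y => hN.wStar_nonneg hh y) (fun y => hN.wStar_le hh y)
        (fun y => hN.wIter_nonneg hh n y) (hN.wIter_le hh n) e1 x
    have h3 : |Lpol β T c h (wIter β T c h n) x - wStar β T c h x|
        ≤ β ^ (n+1) * B / (1 - β) := by
      have h3' := hN.wStar_abs_tail hh (n+1) x
      have heq : wIter β T c h (n+1) x = Lpol β T c h (wIter β T c h n) x := rfl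
      rw [← heq, abs_sub_comm]
      exact h3'
    have htri := abs_sub_le (Lpol β T c h (wStar β T c h) x)
      (Lpol β T c h (wIter β T c h n) x) (wStar β T c h x)
    have hb0 := hN.hβ0.le
    have h1β : (0:ℝ) < 1 - β := by linarith [hN.hβ1]
    have hbn : (0:ℝ) ≤ β ^ n := pow_nonneg hb0 n
    have hpow : β ^ (n+1) * B / (1 - β) ≤ β ^ n * B / (1 - β) := by
      rw [div_le_div_iff_of_pos_right h1β]
      have hmono : β ^ (n+1) ≤ β ^ n := by
        calc β ^ (n+1) = β ^ n * β := by ring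
          _ ≤ β ^ n * 1 := by nlinarith [hN.hβ1]
          _ = β ^ n := by ring
      nlinarith [hN.hB0]
    have hβle : β * (β ^ n * B / (1 - β)) ≤ β ^ n * B / (1 - β) := by
      have h0' : 0 ≤ β ^ n * B / (1 - β) := div_nonneg (mul_nonneg hbn hN.hB0) h1β.le
      nlinarith [hN.hβ1]
    linarith
  have habs : |Lpol β T c h (wStar β T c h) x - wStar β T c h x| ≤ 0 := by
    refine le_of_tendsto_bound ?_ key
    simpa using hN.eps_tendsto.const_mul 2
  have hnn := abs_nonneg (Lpol β T c h (wStar β T c h) x - wStar β T c h x)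
  have hz : |Lpol β T c h (wStar β T c h) x - wStar β T c h x| = 0 := le_antisymm habs hnn
  linarith [sub_eq_zero.mp (abs_eq_zero.mp hz)]

/-- `vStar ≤ wStar` for any stationary policy. -/
lemma vStar_le_wStar (x : X) : vStar β T c x ≤ wStar β T c h x := by
  have key : ∀ n y, vIter β T c n y ≤ wIter β T c h n y := by
    intro n
    induction n with
    | zero => intro y; exact le_refl 0
    | succ n ih =>
        intro y
        have h1 : Lop β T c (vIter β T c n) y ≤ Lop β T c (wIter β T c h n) y :=
          hN.Lop_mono (hN.vIter_meas n) (hN.wIter_meas hh n)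
            (fun z => hN.vIter_nonneg n z) (hN.vIter_le n)
            (fun z => hN.wIter_nonneg hh n z) (hN.wIter_le hh n) ih y
        have h2 : Lop β T c (wIter β T c h n) y ≤ Lpol β T c h (wIter β T c h n) y :=
          ciInf_le (hN.bddBelow_bell _ (fun z => hN.wIter_nonneg hh n z) y) (h y)
        exact le_trans h1 (le_trans h2 (le_refl _))
  refine ciSup_le fun n => le_trans (key n x) (hN.wIter_le_wStar hh n x)

/-- If the policy is `ε`-optimal for the Bellman operator, its value is within
`ε/(1-β)` of `vStar`. -/
lemma wStar_le_of_eps {ε : ℝ} (hε : 0 ≤ ε)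
    (hsel : ∀ y, Lpol β T c h (vStar β T c) y ≤ vStar β T c y + ε) (x : X) :
    wStar β T c h x ≤ vStar β T c x + ε / (1 - β) := by
  have h1β : (0:ℝ) < 1 - β := by linarith [hN.hβ1]
  have hd0 : 0 ≤ ε / (1 - β) := div_nonneg hε h1β.le
  have key : ∀ n y, wIter β T c h n y ≤ vStar β T c y + ε / (1 - β) := by
    intro n
    induction n with
    | zero => intro y; have := hN.vStar_nonneg y; show (0:ℝ) ≤ _; linarith
    | succ n ih =>
        intro y
        have h1 : Lpol β T c h (wIter β T c h n) y
            ≤ Lpol β T c h (fun z => vStar β T c z + ε / (1 - β)) y :=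
          hN.Lpol_mono hh (Cw := hN.C + ε / (1 - β)) (hN.wIter_meas hh n)
            ((hN.vStar_meas).add measurable_const)
            (fun z => hN.wIter_nonneg hh n z) (hN.wIter_le hh n)
            (fun z => by have := hN.vStar_nonneg z; simp only [Pi.add_apply]; linarith)
            (fun z => by have := hN.vStar_le z; simp only [Pi.add_apply]; linarith [hN.hC0])
            ih y
        have h2 : Lpol β T c h (fun z => vStar β T c z + ε / (1 - β)) y
            = Lpol β T c h (vStar β T c) y + β * (ε / (1 - β)) :=
          hN.Lpol_shift hh hN.vStar_meas (fun z => hN.vStar_nonneg z)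
            (fun z => hN.vStar_le z) (ε / (1 - β)) y
        have h3 := hsel y
        have halg : ε + β * (ε / (1 - β)) = ε / (1 - β) := by
          field_simp
          ring
        show Lpol β T c h (wIter β T c h n) y ≤ vStar β T c y + ε / (1 - β)
        calc Lpol β T c h (wIter β T c h n) y
            ≤ Lpol β T c h (vStar β T c) y + β * (ε / (1 - β)) := by rw [← h2]; exact h1
          _ ≤ vStar β T c y + ε + β * (ε / (1 - β)) := by linarith
          _ = vStar β T c y + ε / (1 - β) := by linarith [halg]
  exact ciSup_le fun n => key n x

end Nice
end Pol

section Selector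
variable {X U : Type*} [MeasurableSpace X] [MetricSpace X] [BorelSpace X]
  [SecondCountableTopology X]
  [MeasurableSpace U] [MetricSpace U] [BorelSpace U] [SecondCountableTopology U]
  [CompactSpace U] [Nonempty U]

namespace Nice
variable {β : ℝ} {T : X → U → Measure X} {c : X → U → ℝ} {B : ℝ} (hN : Nice β T c B)
include hN

lemma bell_cont : Continuous fun p : X × U => c p.1 p.2 + β * ∫ a, vStar β T c a ∂T p.1 p.2 := by
  have habs : ∃ C', ∀ y, |vStar β T c y| ≤ C' :=
    ⟨hN.C, fun y => abs_le.2 ⟨by linarith [hN.vStar_nonneg y, hN.hC0], hN.vStar_le y⟩⟩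
  exact hN.hcont.add (continuous_const.mul (hN.hwc _ hN.vStar_cont habs))

lemma vStar_eq_iInf (x : X) :
    vStar β T c x = ⨅ u, (c x u + β * ∫ a, vStar β T c a ∂T x u) :=
  (hN.vStar_fixed x).symm

lemma exists_selector {ε : ℝ} (hε : 0 < ε) :
    ∃ h : X → U, Measurable h ∧
      ∀ y, Lpol β T c h (vStar β T c) y ≤ vStar β T c y + ε := by
  classical
  set Φ : X × U → ℝ := fun p => c p.1 p.2 + β * ∫ a, vStar β T c a ∂T p.1 p.2 with hΦdef
  have hΦ : Continuous Φ := hN.bell_cont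
  have hex : ∀ x : X, ∃ n : ℕ, Φ (x, TopologicalSpace.denseSeq U n) < vStar β T c x + ε := by
    intro x
    have hlt : (⨅ u, Φ (x, u)) < vStar β T c x + ε := by
      rw [← hN.vStar_eq_iInf x]
      linarith
    obtain ⟨u, hu⟩ := exists_lt_of_ciInf_lt hlt
    have hopen : IsOpen {u' : U | Φ (x, u') < vStar β T c x + ε} :=
      isOpen_lt (hΦ.comp (Continuous.prodMk_right x)) continuous_const
    obtain ⟨n, hn⟩ := (TopologicalSpace.denseRange_denseSeq U).exists_mem_open hopen ⟨u, hu⟩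
    exact ⟨n, hn⟩
  have hpmeas : ∀ n : ℕ,
      MeasurableSet {x : X | Φ (x, TopologicalSpace.denseSeq U n) < vStar β T c x + ε} := by
    intro n
    have h1 : Continuous fun x : X => Φ (x, TopologicalSpace.denseSeq U n) :=
      hΦ.comp (continuous_id.prodMk continuous_const)
    have h2 : Continuous fun x : X => vStar β T c x + ε :=
      hN.vStar_cont.add continuous_const
    exact measurableSet_lt h1.measurable h2.measurable
  set N : X → ℕ := fun x => Nat.find (hex x) with hNdef
  have hNmeas : Measurable N :=
    measurable_find _ hpmeas
  refine ⟨fun x => TopologicalSpace.denseSeq U (N x), (measurable_from_top).comp hNmeas, ?_⟩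
  intro y
  have := Nat.find_spec (hex y)
  show Φ (y, TopologicalSpace.denseSeq U (N y)) ≤ vStar β T c y + ε
  exact le_of_lt this

end Nice
end Selector

section JdiscFacts
variable {X U : Type*} [MeasurableSpace X] [MetricSpace X] [BorelSpace X]
  [SecondCountableTopology X]
  [MeasurableSpace U] [MetricSpace U] [BorelSpace U] [SecondCountableTopology U]
  [CompactSpace U] [Nonempty U]

namespace Nice
variable {β : ℝ} {T : X → U → Measure X} {c : X → U → ℝ} {B : ℝ} {γ : Policy X U}
  (hN : Nice β T c B)
include hN

lemma summable_cost (hγ : IsAdmissible γ) (x : X) :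
    Summable fun t => β ^ t * costAt c T γ x t := by
  refine Summable.of_nonneg_of_le
    (fun t => mul_nonneg (pow_nonneg hN.hβ0.le t) (costAt_nonneg' hN.hc0 x t))
    (fun t => ?_)
    ((summable_geometric_of_lt_one hN.hβ0.le hN.hβ1).mul_right B)
  exact mul_le_mul_of_nonneg_left
    (costAt_le hN.hT hN.hTp hγ hN.hc hN.hc0 hN.hcB x t) (pow_nonneg hN.hβ0.le t)

lemma partial_tendsto (hγ : IsAdmissible γ) (x : X) :
    Tendsto (fun n => ∑ t ∈ Finset.range n, β ^ t * costAt c T γ x t) atTop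
      (nhds (Jdisc β c T γ x)) :=
  (hN.summable_cost hγ x).hasSum.tendsto_sum_nat

lemma Jdisc_nonneg (hγ : IsAdmissible γ) (x : X) : 0 ≤ Jdisc β c T γ x :=
  tsum_nonneg fun t => mul_nonneg (pow_nonneg hN.hβ0.le t) (costAt_nonneg' hN.hc0 x t)

/-- Policy evaluation: the value of a stationary policy is `wStar`. -/
lemma Jdisc_eq_wStar {h : X → U} (hh : Measurable h) (x : X) :
    Jdisc β c T (statPolicy h) x = wStar β T c h x := by
  have hγ : IsAdmissible (statPolicy (X := X) h) := isAdmissible_statPolicy hh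
  have hfix : ∀ y, wStar β T c h y
      = c y (h y) + β * ∫ a, wStar β T c h a ∂T y (h y) :=
    fun y => (hN.wStar_fixed hh y).symm
  have hmaster := master_eq (β := β) hN.hT hN.hTp hh hN.hc hN.hc0 hN.hcB hN.hβ0.le
    (hN.wStar_meas hh) (fun y => hN.wStar_nonneg hh y) (fun y => hN.wStar_le hh y) hfix x
  -- remainder tends to zero
  have hrem : Tendsto (fun n => β ^ n * ∫ z, wStar β T c h z.2
      ∂histMeas T (statPolicy h) x n) atTop (nhds 0) := by
    refine squeeze_zero_norm (fun n => ?_) (tendsto_geom_aux hN.hβ0.le hN.hβ1 hN.C)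
    haveI := histMeas_prob hN.hT hN.hTp hγ x n
    have hb : |∫ z, wStar β T c h z.2 ∂histMeas T (statPolicy h) x n| ≤ hN.C :=
      abs_integral_le_bound _ ((hN.wStar_meas hh).comp measurable_snd)
        (fun z => hN.wStar_nonneg hh _) (fun z => hN.wStar_le hh _)
    have hpn : (0:ℝ) ≤ β ^ n := pow_nonneg hN.hβ0.le n
    rw [Real.norm_eq_abs, abs_mul, abs_of_nonneg hpn]
    exact mul_le_mul_of_nonneg_left hb hpn
  have h2 : Tendsto (fun n => ∑ t ∈ Finset.range n, β ^ t * costAt c T (statPolicy h) x t)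
      atTop (nhds (wStar β T c h x)) := by
    have : (fun n => ∑ t ∈ Finset.range n, β ^ t * costAt c T (statPolicy h) x t)
        = fun n => wStar β T c h x - β ^ n * ∫ z, wStar β T c h z.2
            ∂histMeas T (statPolicy h) x n := by
      funext n
      linarith [hmaster n]
    rw [this]
    simpa using tendsto_const_nhds.sub hrem
  exact tendsto_nhds_unique (hN.partial_tendsto hγ x) h2

lemma vStar_le_Jdisc (hγ : IsAdmissible γ) (x : X) :
    vStar β T c x ≤ Jdisc β c T γ x := by
  have hbell : ∀ y u, vStar β T c y ≤ c y u + β * ∫ a, vStar β T c a ∂T y u := by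
    intro y u
    rw [hN.vStar_eq_iInf y]
    exact ciInf_le (hN.bddBelow_bell _ (fun z => hN.vStar_nonneg z) y) u
  have hmaster := master_le (β := β) hN.hT hN.hTp hγ hN.hc hN.hc0 hN.hcB hN.hβ0.le
    hN.vStar_meas (fun y => hN.vStar_nonneg y) (fun y => hN.vStar_le y) hbell x
  have key : ∀ n, vStar β T c x ≤ Jdisc β c T γ x + β ^ n * hN.C := by
    intro n
    haveI := histMeas_prob hN.hT hN.hTp hγ x n
    have h1 : ∑ t ∈ Finset.range n, β ^ t * costAt c T γ x t ≤ Jdisc β c T γ x :=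
      Summable.sum_le_tsum _ (fun t _ => mul_nonneg (pow_nonneg hN.hβ0.le t)
        (costAt_nonneg' hN.hc0 x t)) (hN.summable_cost hγ x)
    have h2 : ∫ z, vStar β T c z.2 ∂histMeas T γ x n ≤ hN.C :=
      integral_le_bound _ (hN.vStar_meas.comp measurable_snd)
        (fun z => hN.vStar_nonneg _) (fun z => hN.vStar_le _)
    have hpn : (0:ℝ) ≤ β ^ n := pow_nonneg hN.hβ0.le n
    have := hmaster n
    nlinarith [mul_le_mul_of_nonneg_left h2 hpn]
  exact le_of_tendsto_bound (tendsto_geom_aux hN.hβ0.le hN.hβ1 hN.C) key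

lemma JdiscOpt_eq_vStar (x : X) : JdiscOpt β c T x = vStar β T c x := by
  classical
  obtain ⟨u0⟩ := ‹Nonempty U›
  have hadm0 : IsAdmissible (statPolicy (X := X) (fun _ => u0)) :=
    isAdmissible_statPolicy measurable_const
  have hne : {r | ∃ γ : Policy X U, IsAdmissible γ ∧ r = Jdisc β c T γ x}.Nonempty :=
    ⟨Jdisc β c T (statPolicy fun _ => u0) x, statPolicy fun _ => u0, hadm0, rfl⟩
  have hbdd : BddBelow {r | ∃ γ : Policy X U, IsAdmissible γ ∧ r = Jdisc β c T γ x} := by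
    refine ⟨0, ?_⟩
    rintro r ⟨γ', hγ', rfl⟩
    exact hN.Jdisc_nonneg hγ' x
  refine le_antisymm ?_ ?_
  · -- JdiscOpt ≤ vStar  (via ε-optimal selectors)
    have key : ∀ ε : ℝ, 0 < ε → JdiscOpt β c T x ≤ vStar β T c x + ε := by
      intro ε hε
      have h1β : (0:ℝ) < 1 - β := by linarith [hN.hβ1]
      obtain ⟨h, hh, hsel⟩ := hN.exists_selector (ε := ε * (1 - β)) (by positivity)
      have hval : Jdisc β c T (statPolicy h) x ≤ vStar β T c x + ε := by
        rw [hN.Jdisc_eq_wStar hh x]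
        have := hN.wStar_le_of_eps hh (by positivity) hsel x
        have heq : ε * (1 - β) / (1 - β) = ε := by field_simp
        rw [heq] at this
        exact this
      refine le_trans (csInf_le hbdd ?_) hval
      exact ⟨statPolicy h, isAdmissible_statPolicy hh, rfl⟩
    by_contra hcon
    push_neg at hcon
    have hε : 0 < (JdiscOpt β c T x - vStar β T c x) / 2 := by linarith
    have := key _ hε
    linarith
  · refine le_csInf hne ?_
    rintro r ⟨γ', hγ', rfl⟩
    exact hN.vStar_le_Jdisc hγ' x

end Nice
end JdiscFacts

section Assembly
variable {X U : Type*} [MeasurableSpace X] [MetricSpace X] [BorelSpace X]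
  [SecondCountableTopology X]
  [MeasurableSpace U] [MetricSpace U] [BorelSpace U] [SecondCountableTopology U]
  [CompactSpace U] [Nonempty U]

lemma iter_bound {β K D0 : ℝ} (hβ0 : 0 ≤ β) (hβ1 : β < 1) {φ : X → ℝ}
    (hK : 0 ≤ K) (hD0' : 0 ≤ D0) (hD0 : ∀ y, φ y ≤ D0)
    (hstep : ∀ D : ℝ, 0 ≤ D → (∀ y, φ y ≤ D) → ∀ x, φ x ≤ K + β * D) :
    ∀ x, φ x ≤ K / (1 - β) := by
  have h1β : (0:ℝ) < 1 - β := by linarith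
  set L := K / (1 - β) with hLdef
  have hL0 : 0 ≤ L := div_nonneg hK h1β.le
  have hKL : K + β * L = L := by
    rw [hLdef]
    field_simp
    ring
  have hDn0 : ∀ n : ℕ, 0 ≤ L + β ^ n * (D0 - L) := by
    intro n
    have h1 : β ^ n ≤ 1 := pow_le_one₀ hβ0 hβ1.le
    have h2 : (0:ℝ) ≤ β ^ n := pow_nonneg hβ0 n
    nlinarith
  have hseq : ∀ n : ℕ, ∀ y, φ y ≤ L + β ^ n * (D0 - L) := by
    intro n
    induction n with
    | zero => intro y; simpa using hD0 y
    | succ n ih =>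
        intro y
        have := hstep (L + β ^ n * (D0 - L)) (hDn0 n) ih y
        calc φ y ≤ K + β * (L + β ^ n * (D0 - L)) := this
          _ = (K + β * L) + β ^ (n+1) * (D0 - L) := by ring
          _ = L + β ^ (n+1) * (D0 - L) := by rw [hKL]
  intro x
  refine le_of_tendsto_bound (tendsto_geom_aux hβ0 hβ1 (D0 - L)) ?_
  intro n
  exact hseq n x

lemma dW_integral {T S : X → U → Measure X} {DW : ℝ}
    (hDW : ∀ f : X → ℝ, LipschitzWith 1 f → ∀ x u, dFun f (T x u) (S x u) ≤ DW)
    (hTp : ∀ x u, IsProbabilityMeasure (T x u)) (hSp : ∀ x u, IsProbabilityMeasure (S x u))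
    {K : ℝ≥0} {v : X → ℝ} (hv : LipschitzWith K v) (x : X) (u : U) :
    |(∫ a, v a ∂T x u) - ∫ a, v a ∂S x u| ≤ (K : ℝ) * DW := by
  rcases eq_or_ne K 0 with h0 | h0
  · have hconst : ∀ a : X, v a = v x := fun a => by
      have := hv.dist_le_mul a x
      rw [h0] at this
      simp only [NNReal.coe_zero, zero_mul] at this
      exact dist_le_zero.mp this
    have hiT : ∫ a, v a ∂T x u = v x := by
      haveI := hTp x u
      rw [integral_congr_ae (Eventually.of_forall hconst)]; simp
    have hiS : ∫ a, v a ∂S x u = v x := by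
      haveI := hSp x u
      rw [integral_congr_ae (Eventually.of_forall hconst)]; simp
    rw [hiT, hiS, h0]
    simp
  · have hKpos : (0:ℝ) < K := by
      have := (zero_le (a := K)).lt_of_ne (Ne.symm h0)
      exact_mod_cast this
    set f : X → ℝ := fun a => (K:ℝ)⁻¹ * v a with hf_def
    have hf : LipschitzWith 1 f := by
      refine LipschitzWith.of_dist_le_mul fun a b => ?_
      have h1 := hv.dist_le_mul a b
      rw [Real.dist_eq] at h1 ⊢
      have heq : f a - f b = (K:ℝ)⁻¹ * (v a - v b) := by rw [hf_def]; ring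
      rw [heq, abs_mul, abs_of_nonneg (by positivity : (0:ℝ) ≤ (K:ℝ)⁻¹),
        NNReal.coe_one, one_mul]
      calc (K:ℝ)⁻¹ * |v a - v b| ≤ (K:ℝ)⁻¹ * ((K:ℝ) * dist a b) := by
            have h2 : |v a - v b| ≤ (K:ℝ) * dist a b := by
              simpa [Real.dist_eq] using h1
            nlinarith [inv_nonneg.mpr hKpos.le]
        _ = dist a b := by field_simp
    have hd := hDW f hf x u
    have hd' : |(∫ a, f a ∂T x u) - ∫ a, f a ∂S x u| ≤ DW := hd
    have hix : ∫ a, f a ∂T x u = (K:ℝ)⁻¹ * ∫ a, v a ∂T x u := integral_const_mul _ _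
    have hiy : ∫ a, f a ∂S x u = (K:ℝ)⁻¹ * ∫ a, v a ∂S x u := integral_const_mul _ _
    rw [hix, hiy] at hd'
    have heq : (K:ℝ)⁻¹ * (∫ a, v a ∂T x u) - (K:ℝ)⁻¹ * ∫ a, v a ∂S x u
        = (K:ℝ)⁻¹ * ((∫ a, v a ∂T x u) - ∫ a, v a ∂S x u) := by ring
    rw [heq, abs_mul, abs_of_nonneg (by positivity : (0:ℝ) ≤ (K:ℝ)⁻¹)] at hd'
    have h3 := mul_le_mul_of_nonneg_left hd' hKpos.le
    rw [← mul_assoc, mul_inv_cancel₀ (ne_of_gt hKpos), one_mul] at h3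
    exact h3

end Assembly
/-- Corollary `upperbound3cor`: explicit Lipschitz-constant bounds for
the discounted criterion under Assumption M (Wasserstein regularity).  `Kc = ‖c‖_Lip`,
`KT = ‖T‖_Lip`, `Kchat = ‖ĉ‖_Lip`, `KS = ‖S‖_Lip`; the quantities `‖c−ĉ‖_∞` and
`d_{W1}(T,S)` (in dual form) are represented by arbitrary upper bounds `Dc`, `DW`. -/
theorem discounted_robustness_wasserstein_regular
    {X U : Type*} [MeasurableSpace X] [MetricSpace X] [BorelSpace X]
    [CompleteSpace X] [SecondCountableTopology X]
    [MeasurableSpace U] [MetricSpace U] [BorelSpace U]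
    [CompleteSpace U] [SecondCountableTopology U] [CompactSpace U] [Nonempty U]
    (T S : X → U → Measure X) (c chat : X → U → ℝ)
    (β : ℝ) (hβ0 : 0 < β) (hβ1 : β < 1)
    (Kc KT : ℝ≥0) (hMT : AssumptionM β T c Kc KT)
    (hBS : AssumptionB S chat)
    (g : X → U) (hgmeas : Measurable g)
    (hgopt : ∀ x, Jdisc β chat S (statPolicy g) x = JdiscOpt β chat S x)
    (Dc DW : ℝ)
    (hDc : ∀ x u, |c x u - chat x u| ≤ Dc)
    (hDW : ∀ f : X → ℝ, LipschitzWith 1 f → ∀ x u, dFun f (T x u) (S x u) ≤ DW) :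
    (∀ x, |JdiscOpt β c T x - JdiscOpt β chat S x| ≤
      Dc / (1 - β) + β * Kc / ((1 - β) * (1 - β * KT)) * DW)
    ∧
    (∀ x, |Jdisc β c T (statPolicy g) x - JdiscOpt β c T x| ≤
      2 / (1 - β) ^ 2 * Dc + 2 * β * Kc / ((1 - β) ^ 2 * (1 - β * KT)) * DW)
    ∧
    (∀ Kchat KS : ℝ≥0, AssumptionM β S chat Kchat KS →
      ∀ x, |Jdisc β c T (statPolicy g) x - JdiscOpt β c T x| ≤
        2 / (1 - β) * Dc +
        β / (1 - β) * ((Kc : ℝ) / (1 - β * KT) + (Kchat : ℝ) / (1 - β * KS)) * DW) := by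
  classical
  obtain ⟨hBT, hKc, hKT, hβKT⟩ := hMT
  obtain ⟨hc0T, ⟨B0, hB0⟩, hcontT, hTpr, hTmeas, hwcT⟩ := hBT
  obtain ⟨hc0S, ⟨B1, hB1⟩, hcontS, hSpr, hSmeas, hwcS⟩ := hBS
  have hNT : Nice β T c (max B0 0) :=
    ⟨hTmeas, hTpr, hcontT, hc0T,
      fun x u => le_trans (le_trans (le_abs_self _) (hB0 x u)) (le_max_left _ _),
      le_max_right _ _, hwcT, hβ0, hβ1⟩
  have hNS : Nice β S chat (max B1 0) :=
    ⟨hSmeas, hSpr, hcontS, hc0S,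
      fun x u => le_trans (le_trans (le_abs_self _) (hB1 x u)) (le_max_left _ _),
      le_max_right _ _, hwcS, hβ0, hβ1⟩
  have h1β : (0:ℝ) < 1 - β := by linarith
  have hβKT' : (0:ℝ) < 1 - β * KT := by linarith
  set KstarT : ℝ≥0 := ⟨(Kc:ℝ) / (1 - β * KT), div_nonneg Kc.coe_nonneg hβKT'.le⟩
    with hKstarTdef
  have hKstarT_coe : (KstarT : ℝ) = (Kc:ℝ) / (1 - β * KT) := rfl
  have hKstarT0 : (0:ℝ) ≤ (KstarT:ℝ) := KstarT.coe_nonneg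
  have hKsT : (Kc:ℝ) + β * KT * KstarT ≤ (KstarT:ℝ) := by
    rw [hKstarT_coe]
    refine le_of_eq ?_
    field_simp [hβKT'.ne']
    ring
  have hLipT : LipschitzWith KstarT (vStar β T c) := hNT.vStar_lip hKc hKT hKsT
  have hJT : ∀ y, JdiscOpt β c T y = vStar β T c y := fun y => hNT.JdiscOpt_eq_vStar y
  have hJS : ∀ y, JdiscOpt β chat S y = vStar β S chat y := fun y => hNS.JdiscOpt_eq_vStar y
  have hJSg : ∀ y, Jdisc β chat S (statPolicy g) y = wStar β S chat g y :=
    fun y => hNS.Jdisc_eq_wStar hgmeas y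
  have hwSvS : wStar β S chat g = vStar β S chat := by
    funext y
    rw [← hJSg y, hgopt y, hJS y]
  have hJTg : ∀ y, Jdisc β c T (statPolicy g) y = wStar β T c g y :=
    fun y => hNT.Jdisc_eq_wStar hgmeas y
  -- Nonnegativity of `Dc` and `DW`, given a point of `X`.
  have hDc0 : ∀ _ : X, 0 ≤ Dc := fun x0 =>
    le_trans (abs_nonneg _) (hDc x0 (Classical.arbitrary U))
  have hDW0 : ∀ _ : X, 0 ≤ DW := fun x0 => by
    have hlip0 : LipschitzWith 1 (fun _ : X => (0:ℝ)) :=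
      (LipschitzWith.const (0:ℝ)).weaken zero_le
    exact le_trans (abs_nonneg _) (hDW _ hlip0 x0 (Classical.arbitrary U))
  -- The per-action comparison estimate.
  have hperu : ∀ D : ℝ, (∀ y, |vStar β T c y - vStar β S chat y| ≤ D) →
      ∀ (y : X) (u : U),
      |(c y u + β * ∫ a, vStar β T c a ∂T y u)
        - (chat y u + β * ∫ a, vStar β S chat a ∂S y u)|
        ≤ Dc + β * ((KstarT:ℝ) * DW) + β * D := by
    intro D hDb y u
    have t1 : |c y u - chat y u| ≤ Dc := hDc y u
    have t2 : |(∫ a, vStar β T c a ∂T y u) - ∫ a, vStar β T c a ∂S y u|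
        ≤ (KstarT:ℝ) * DW := dW_integral hDW hTpr hSpr hLipT y u
    have t3 : |(∫ a, vStar β T c a ∂S y u) - ∫ a, vStar β S chat a ∂S y u| ≤ D := by
      haveI := hSpr y u
      exact abs_integral_sub_le hNT.vStar_meas hNS.vStar_meas
        (fun z => hNT.vStar_nonneg z) (fun z => hNT.vStar_le z)
        (fun z => hNS.vStar_nonneg z) (fun z => hNS.vStar_le z) hDb
    have heq : (c y u + β * ∫ a, vStar β T c a ∂T y u)
        - (chat y u + β * ∫ a, vStar β S chat a ∂S y u)
        = (c y u - chat y u)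
          + β * (((∫ a, vStar β T c a ∂T y u) - ∫ a, vStar β T c a ∂S y u)
            + ((∫ a, vStar β T c a ∂S y u) - ∫ a, vStar β S chat a ∂S y u)) := by ring
    rw [heq]
    refine le_trans (abs_add_le _ _) ?_
    rw [abs_mul, abs_of_nonneg hβ0.le]
    have t4 := abs_add_le ((∫ a, vStar β T c a ∂T y u) - ∫ a, vStar β T c a ∂S y u)
      ((∫ a, vStar β T c a ∂S y u) - ∫ a, vStar β S chat a ∂S y u)
    have t5 : |((∫ a, vStar β T c a ∂T y u) - ∫ a, vStar β T c a ∂S y u)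
        + ((∫ a, vStar β T c a ∂S y u) - ∫ a, vStar β S chat a ∂S y u)|
        ≤ (KstarT:ℝ) * DW + D := by linarith
    nlinarith [hβ0.le]
  -- (i) pointwise bound between optimal values.
  have hshared : ∀ _ : X, ∀ y, |vStar β T c y - vStar β S chat y|
      ≤ (Dc + β * ((KstarT:ℝ) * DW)) / (1 - β) := by
    intro x0
    have hprod : 0 ≤ β * ((KstarT:ℝ) * DW) :=
      mul_nonneg hβ0.le (mul_nonneg hKstarT0 (hDW0 x0))
    have hA0 : 0 ≤ Dc + β * ((KstarT:ℝ) * DW) := by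
      have := hDc0 x0; linarith
    refine iter_bound hβ0.le hβ1 hA0 (add_nonneg hNT.hC0 hNS.hC0) ?_ ?_
    · intro y
      have := hNT.vStar_nonneg y
      have := hNT.vStar_le y
      have := hNS.vStar_nonneg y
      have := hNS.vStar_le y
      rw [abs_le]
      constructor <;> linarith
    · intro D hD hDb x
      have e1 := hNT.vStar_fixed x
      have e2 := hNS.vStar_fixed x
      rw [← e1, ← e2]
      exact abs_ciInf_sub_ciInf
        (fun u => by
          have h1 := hc0T x u
          have h2 : 0 ≤ ∫ a, vStar β T c a ∂T x u :=
            integral_nonneg fun z => hNT.vStar_nonneg z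
          nlinarith [hβ0.le])
        (fun u => by
          have h1 := hc0S x u
          have h2 : 0 ≤ ∫ a, vStar β S chat a ∂S x u :=
            integral_nonneg fun z => hNS.vStar_nonneg z
          nlinarith [hβ0.le])
        (fun u => hperu D hDb x u)
  refine ⟨?_, ?_, ?_⟩
  · -- statement (i)
    intro x
    rw [hJT x, hJS x]
    refine le_trans (hshared x x) (le_of_eq ?_)
    rw [hKstarT_coe]
    field_simp
  · -- statement (ii)
    intro x
    have hΔ := hshared x
    have hDc0' := hDc0 x
    have hDW0' := hDW0 x
    set Δv : ℝ := (Dc + β * ((KstarT:ℝ) * DW)) / (1 - β) with hΔvdef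
    have hprod : 0 ≤ β * ((KstarT:ℝ) * DW) :=
      mul_nonneg hβ0.le (mul_nonneg hKstarT0 hDW0')
    have hΔv0 : 0 ≤ Δv := by
      rw [hΔvdef]
      exact div_nonneg (by linarith) h1β.le
    have hfixS : ∀ y, Lpol β S chat g (vStar β S chat) y = vStar β S chat y := by
      intro y
      have hst := hNS.wStar_fixed hgmeas y
      rw [hwSvS] at hst
      exact hst
    have hW2 : ∀ y, wStar β T c g y - vStar β T c y
        ≤ (Dc + β * ((KstarT:ℝ) * DW) + (1 + β) * Δv) / (1 - β) := by
      have hK0 : 0 ≤ Dc + β * ((KstarT:ℝ) * DW) + (1 + β) * Δv := by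
        have t2 : 0 ≤ (1 + β) * Δv := mul_nonneg (by linarith) hΔv0
        linarith
      refine iter_bound hβ0.le hβ1 hK0 hNT.hC0 ?_ ?_
      · intro y
        have := hNT.wStar_le hgmeas y
        have := hNT.vStar_nonneg y
        linarith
      · intro D hD hDb y
        have e1 : wStar β T c g y = Lpol β T c g (wStar β T c g) y :=
          (hNT.wStar_fixed hgmeas y).symm
        have hmono : Lpol β T c g (wStar β T c g) y
            ≤ Lpol β T c g (fun z => vStar β T c z + D) y :=
          hNT.Lpol_mono hgmeas (Cv := hNT.C) (Cw := hNT.C + D)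
            (hNT.wStar_meas hgmeas) (hNT.vStar_meas.add measurable_const)
            (fun z => hNT.wStar_nonneg hgmeas z) (fun z => hNT.wStar_le hgmeas z)
            (fun z => by have := hNT.vStar_nonneg z; simp only [Pi.add_apply]; linarith)
            (fun z => by have := hNT.vStar_le z; simp only [Pi.add_apply]; linarith)
            (fun z => by have := hDb z; simp only [Pi.add_apply]; linarith) y
        have hshift : Lpol β T c g (fun z => vStar β T c z + D) y
            = Lpol β T c g (vStar β T c) y + β * D :=
          hNT.Lpol_shift hgmeas hNT.vStar_meas (fun z => hNT.vStar_nonneg z)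
            (fun z => hNT.vStar_le z) D y
        have hdiff : |Lpol β T c g (vStar β T c) y - Lpol β S chat g (vStar β S chat) y|
            ≤ Dc + β * ((KstarT:ℝ) * DW) + β * Δv := hperu Δv hΔ y (g y)
        have hC : Lpol β T c g (vStar β T c) y
            ≤ vStar β S chat y + (Dc + β * ((KstarT:ℝ) * DW) + β * Δv) := by
          have h6 := (abs_le.1 hdiff).2
          have h7 := hfixS y
          linarith
        have hD2 : vStar β S chat y ≤ vStar β T c y + Δv := by
          have h8 := (abs_le.1 (hΔ y)).1
          linarith
        have := hDb y
        calc wStar β T c g y - vStar β T c y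
            = Lpol β T c g (wStar β T c g) y - vStar β T c y := by rw [← e1]
          _ ≤ Lpol β T c g (vStar β T c) y + β * D - vStar β T c y := by
              rw [← hshift]; linarith
          _ ≤ (Dc + β * ((KstarT:ℝ) * DW) + (1 + β) * Δv) + β * D := by linarith
    rw [hJT x, hJTg x]
    have hlow := hNT.vStar_le_wStar hgmeas (h := g) x
    rw [abs_of_nonneg (by linarith : (0:ℝ) ≤ wStar β T c g x - vStar β T c x)]
    refine le_trans (hW2 x) (le_of_eq ?_)
    rw [hΔvdef, hKstarT_coe]
    field_simp
    ring
  · -- statement (iii)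
    intro Kchat KS hMS x
    obtain ⟨_, hKchat, hKS, hβKS⟩ := hMS
    have hβKS' : (0:ℝ) < 1 - β * KS := by linarith
    set KstarS : ℝ≥0 := ⟨(Kchat:ℝ) / (1 - β * KS), div_nonneg Kchat.coe_nonneg hβKS'.le⟩
      with hKstarSdef
    have hKstarS_coe : (KstarS : ℝ) = (Kchat:ℝ) / (1 - β * KS) := rfl
    have hKstarS0 : (0:ℝ) ≤ (KstarS:ℝ) := KstarS.coe_nonneg
    have hKsS : (Kchat:ℝ) + β * KS * KstarS ≤ (KstarS:ℝ) := by
      rw [hKstarS_coe]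
      refine le_of_eq ?_
      field_simp [hβKS'.ne']
      ring
    have hLipS : LipschitzWith KstarS (vStar β S chat) := hNS.vStar_lip hKchat hKS hKsS
    have hLipwS : LipschitzWith KstarS (wStar β S chat g) := by rw [hwSvS]; exact hLipS
    have hΔ := hshared x
    have hDc0' := hDc0 x
    have hDW0' := hDW0 x
    have hW3 : ∀ y, |wStar β T c g y - wStar β S chat g y|
        ≤ (Dc + β * ((KstarS:ℝ) * DW)) / (1 - β) := by
      have hK0 : 0 ≤ Dc + β * ((KstarS:ℝ) * DW) := by
        have := mul_nonneg hβ0.le (mul_nonneg hKstarS0 hDW0')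
        linarith
      refine iter_bound hβ0.le hβ1 hK0 (add_nonneg hNT.hC0 hNS.hC0) ?_ ?_
      · intro y
        have := hNT.wStar_le hgmeas (h := g) y
        have := hNT.wStar_nonneg hgmeas (h := g) y
        have := hNS.wStar_le hgmeas (h := g) y
        have := hNS.wStar_nonneg hgmeas (h := g) y
        rw [abs_le]
        constructor <;> linarith
      · intro D hD hDb y
        have e1 : wStar β T c g y = Lpol β T c g (wStar β T c g) y :=
          (hNT.wStar_fixed hgmeas y).symm
        have e2 : wStar β S chat g y = Lpol β S chat g (wStar β S chat g) y :=
          (hNS.wStar_fixed hgmeas y).symm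
        have hfirst : |Lpol β T c g (wStar β T c g) y - Lpol β T c g (wStar β S chat g) y|
            ≤ β * D :=
          hNT.Lpol_abs_le hgmeas (hNT.wStar_meas hgmeas) (hNS.wStar_meas hgmeas)
            (fun z => hNT.wStar_nonneg hgmeas z) (fun z => hNT.wStar_le hgmeas z)
            (fun z => hNS.wStar_nonneg hgmeas z) (fun z => hNS.wStar_le hgmeas z) hDb y
        have hsecond : |Lpol β T c g (wStar β S chat g) y
            - Lpol β S chat g (wStar β S chat g) y|
            ≤ Dc + β * ((KstarS:ℝ) * DW) := by
          have t1 : |c y (g y) - chat y (g y)| ≤ Dc := hDc y (g y)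
          have t2 : |(∫ a, wStar β S chat g a ∂T y (g y))
              - ∫ a, wStar β S chat g a ∂S y (g y)| ≤ (KstarS:ℝ) * DW :=
            dW_integral hDW hTpr hSpr hLipwS y (g y)
          show |(c y (g y) + β * ∫ a, wStar β S chat g a ∂T y (g y))
              - (chat y (g y) + β * ∫ a, wStar β S chat g a ∂S y (g y))|
              ≤ Dc + β * ((KstarS:ℝ) * DW)
          have heq : (c y (g y) + β * ∫ a, wStar β S chat g a ∂T y (g y))
              - (chat y (g y) + β * ∫ a, wStar β S chat g a ∂S y (g y))
              = (c y (g y) - chat y (g y))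
                + β * ((∫ a, wStar β S chat g a ∂T y (g y))
                  - ∫ a, wStar β S chat g a ∂S y (g y)) := by ring
          rw [heq]
          refine le_trans (abs_add_le _ _) ?_
          rw [abs_mul, abs_of_nonneg hβ0.le]
          nlinarith [hβ0.le]
        have htri := abs_sub_le (Lpol β T c g (wStar β T c g) y)
          (Lpol β T c g (wStar β S chat g) y) (Lpol β S chat g (wStar β S chat g) y)
        calc |wStar β T c g y - wStar β S chat g y|
            = |Lpol β T c g (wStar β T c g) y - Lpol β S chat g (wStar β S chat g) y| := by
              rw [← e1, ← e2]
          _ ≤ β * D + (Dc + β * ((KstarS:ℝ) * DW)) := by linarith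
          _ = (Dc + β * ((KstarS:ℝ) * DW)) + β * D := by ring
    rw [hJT x, hJTg x]
    have htri2 := abs_sub_le (wStar β T c g x) (wStar β S chat g x) (vStar β T c x)
    have hvv : |wStar β S chat g x - vStar β T c x|
        ≤ (Dc + β * ((KstarT:ℝ) * DW)) / (1 - β) := by
      rw [hwSvS, abs_sub_comm]
      exact hΔ x
    have hsum : |wStar β T c g x - wStar β S chat g x| + |wStar β S chat g x - vStar β T c x|
        ≤ (Dc + β * ((KstarS:ℝ) * DW)) / (1 - β) + (Dc + β * ((KstarT:ℝ) * DW)) / (1 - β) :=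
      add_le_add (hW3 x) hvv
    refine le_trans htri2 (le_trans hsum (le_of_eq ?_))
    rw [hKstarT_coe, hKstarS_coe]
    field_simp
    ring

end MDPRobust
end
end

section
/- Let (X,U,T,c) be an MDP such that x ↦ T(·|x,u) is ‖T‖_Lip-Lipschitz from X into (P(X),W1) for every u ∈ U. Let {B_i}_{i=1}^M be a Borel partition of X with representatives y_i ∈ B_i and quantization error δ_M, let π ∈ P(X) with π(B_i) > 0 for all i, let T^{π,M} be the quantized kernel on {y_1,…,y_M}, and let T̃^{π,M} be its piecewise-constant extension to X. Then d_{W1}(T̃^{π,M}, T) ≤ (1 + ‖T‖_Lip) δ_M. -/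
open MeasureTheory Filter Topology
open scoped NNReal ENNReal

noncomputable section

namespace MDPRobust

open Classical


section AuxW1

open Metric

variable {X U : Type*} [MeasurableSpace X] [MetricSpace X] [BorelSpace X]

set_option linter.unusedSectionVars false

lemma kernel_integral_continuous (T : X → U → Measure X) (KT : ℝ≥0)
    (hTLip : KernelLipschitz T KT) (u : U) {f : X → ℝ} (hf : LipschitzWith 1 f) :
    Continuous fun a => ∫ z, f z ∂(T a u) :=
  (LipschitzWith.of_dist_le_mul (K := KT) fun a b => by
    rw [Real.dist_eq]; exact hTLip f hf u a b).continuous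

lemma measurable_kernel_apply (T : X → U → Measure X)
    (hTprob : ∀ x u, IsProbabilityMeasure (T x u))
    (KT : ℝ≥0) (hTLip : KernelLipschitz T KT) (u : U)
    {A : Set X} (hA : MeasurableSet A) :
    Measurable fun a => T a u A := by
  have hborel : (inferInstance : MeasurableSpace X)
      = MeasurableSpace.generateFrom {s : Set X | IsClosed s} :=
    BorelSpace.measurable_eq.trans borel_eq_generateFrom_isClosed
  refine MeasurableSpace.induction_on_inter (C := fun A _ => Measurable fun a => T a u A)
    hborel ?_ ?_ ?_ ?_ ?_ _ hA
  · intro s hs t ht _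
    exact hs.inter ht
  · simp only [measure_empty]; exact measurable_const
  · intro C hC
    replace hC : IsClosed C := hC
    rcases Set.eq_empty_or_nonempty C with rfl | hCne
    · simp only [measure_empty]; exact measurable_const
    set Fn : ℕ → X → ℝ := fun n z => max (1 - (n : ℝ) * infDist z C) 0 with hFnd
    have hFcont : ∀ n : ℕ, Continuous (Fn n) := fun n =>
      (continuous_const.sub (continuous_const.mul (continuous_infDist_pt C))).max
        continuous_const
    have hFbd : ∀ (n : ℕ) (z : X), ‖Fn n z‖ ≤ (1 : ℝ) := by
      intro n z
      have h0 : 0 ≤ (n : ℝ) * infDist z C :=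
        mul_nonneg (Nat.cast_nonneg n) infDist_nonneg
      rw [Real.norm_eq_abs, abs_le]
      constructor
      · have := le_max_right (1 - (n : ℝ) * infDist z C) 0
        linarith
      · exact max_le (by linarith) zero_le_one
    have hptwise : ∀ z : X,
        Tendsto (fun n => Fn n z) atTop (𝓝 (C.indicator (fun _ => (1 : ℝ)) z)) := by
      intro z
      by_cases hz : z ∈ C
      · have heq : ∀ n, Fn n z = 1 := by
          intro n; simp [hFnd, infDist_zero_of_mem hz]
        rw [Set.indicator_of_mem hz]
        simp only [heq]
        exact tendsto_const_nhds
      · have hd : 0 < infDist z C := by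
          rcases lt_or_eq_of_le (infDist_nonneg (s := C) (x := z)) with h | h
          · exact h
          · exact absurd ((hC.mem_iff_infDist_zero hCne).2 h.symm) hz
        rw [Set.indicator_of_notMem hz]
        obtain ⟨N, hN⟩ := exists_nat_ge (1 / infDist z C)
        refine Tendsto.congr' ?_ (tendsto_const_nhds (x := (0 : ℝ)))
        filter_upwards [eventually_ge_atTop N] with n hn
        have h1 : (1 : ℝ) / infDist z C ≤ (n : ℝ) := hN.trans (Nat.cast_le.2 hn)
        rw [div_le_iff₀ hd] at h1
        exact (max_eq_right (by nlinarith)).symm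
    have hint : ∀ a : X,
        Tendsto (fun n => ∫ z, Fn n z ∂(T a u)) atTop (𝓝 ((T a u C).toReal)) := by
      intro a
      haveI := hTprob a u
      have h := MeasureTheory.tendsto_integral_of_dominated_convergence
        (F := fun n z => Fn n z) (f := C.indicator fun _ => (1 : ℝ))
        (bound := fun _ => (1 : ℝ))
        (fun n => (hFcont n).aestronglyMeasurable)
        (integrable_const (μ := T a u) 1)
        (fun n => ae_of_all _ (hFbd n))
        (ae_of_all _ hptwise)
      rwa [integral_indicator_const (1 : ℝ) hC.measurableSet, smul_eq_mul, mul_one] at h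
    have hmeasn : ∀ n : ℕ, Measurable fun a => ∫ z, Fn (n + 1) z ∂(T a u) := by
      intro n
      set c : ℝ := ((n : ℝ) + 1) with hc
      have hcpos : 0 < c := by positivity
      have hg : LipschitzWith 1 fun z => max (c⁻¹ - infDist z C) 0 := by
        refine LipschitzWith.of_dist_le_mul fun a b => ?_
        rw [NNReal.coe_one, one_mul, Real.dist_eq]
        calc |max (c⁻¹ - infDist a C) 0 - max (c⁻¹ - infDist b C) 0|
            ≤ |(c⁻¹ - infDist a C) - (c⁻¹ - infDist b C)| := abs_max_sub_max_le_abs _ _ _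
          _ = |infDist b C - infDist a C| := by rw [sub_sub_sub_cancel_left]
          _ ≤ dist b a := by
              have h := (lipschitz_infDist_pt (s := C)).dist_le_mul b a
              rwa [NNReal.coe_one, one_mul, Real.dist_eq] at h
          _ = dist a b := dist_comm b a
      have hptw : ∀ z : X, Fn (n + 1) z = c * max (c⁻¹ - infDist z C) 0 := by
        intro z
        rw [mul_max_of_nonneg _ _ hcpos.le, mul_zero, mul_sub,
          mul_inv_cancel₀ hcpos.ne']
        simp only [hFnd, hc]
        push_cast
        ring_nf
      have heq : (fun a => ∫ z, Fn (n + 1) z ∂(T a u))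
          = fun a => c * ∫ z, max (c⁻¹ - infDist z C) 0 ∂(T a u) := by
        funext a
        simp_rw [hptw]
        exact MeasureTheory.integral_const_mul c _
      rw [heq]
      exact (continuous_const.mul
        (kernel_integral_continuous T KT hTLip u hg)).measurable
    have hmeas : Measurable fun a => (T a u C).toReal :=
      measurable_of_tendsto_metrizable hmeasn
        (tendsto_pi_nhds.2 fun a => (hint a).comp (tendsto_add_atTop_nat 1))
    have hfin : (fun a => T a u C) = fun a => ENNReal.ofReal ((T a u C).toReal) := by
      funext a
      haveI := hTprob a u
      rw [ENNReal.ofReal_toReal (measure_ne_top _ _)]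
    rw [hfin]
    exact hmeas.ennreal_ofReal
  · intro t ht hmt
    have heq : (fun a => T a u tᶜ) = fun a => 1 - T a u t := by
      funext a
      haveI := hTprob a u
      rw [measure_compl ht (measure_ne_top _ _), measure_univ]
    rw [heq]
    exact measurable_const.sub hmt
  · intro g hdisj hgmeas hC
    have heq : (fun a => T a u (⋃ n, g n)) = fun a => ∑' n, T a u (g n) := by
      funext a
      exact measure_iUnion hdisj hgmeas
    rw [heq]
    exact Measurable.ennreal_tsum hC

end AuxW1

/-- Lemma `anotherextension_error`: the piecewise-constant extension
`T̃^{π,M}` of the quantized kernel `T^{π,M}` is within Wasserstein distance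
`(1+‖T‖_Lip)·δ_M` of `T`.  Here `B` is a Borel partition of `X` with representatives
`y i ∈ B i`, `idx` assigns to each state its bin, `δ` is (an upper bound on) the
quantization error, and the conclusion `d_{W1}(T̃^{π,M}, T) ≤ (1+‖T‖_Lip) δ_M` is
expressed in the Kantorovich–Rubinstein dual form, uniformly in `(x,u)`. -/
theorem piecewise_constant_extension_W1_error
    {X U : Type*} [MeasurableSpace X] [MetricSpace X] [BorelSpace X]
    [CompleteSpace X] [SecondCountableTopology X]
    (T : X → U → Measure X)
    (hTprob : ∀ x u, IsProbabilityMeasure (T x u))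
    (KT : ℝ≥0) (hTLip : KernelLipschitz T KT)
    (M : ℕ) (hM : 0 < M)
    (B : Fin M → Set X) (hBmeas : ∀ i, MeasurableSet (B i))
    (hBdisj : Pairwise (Function.onFun Disjoint B))
    (hBcover : (⋃ i, B i) = Set.univ)
    (y : Fin M → X) (hy : ∀ i, y i ∈ B i)
    (idx : X → Fin M) (hidx : ∀ x, x ∈ B (idx x))
    (π : Measure X) [IsProbabilityMeasure π] (hπ : ∀ i, 0 < π (B i))
    (δ : ℝ) (hδ : ∀ i, ∀ x ∈ B i, ∀ x' ∈ B i, dist x x' ≤ δ) :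
    ∀ f : X → ℝ, LipschitzWith 1 f → ∀ (x : X) (u : U),
      dFun f
        (∑ j : Fin M,
          ENNReal.ofReal
            ((∫ a in B (idx x), ((T a u) (B j)).toReal ∂π) / (π (B (idx x))).toReal) •
          Measure.dirac (y j))
        (T x u)
      ≤ (1 + (KT : ℝ)) * δ := by
  intro f hf x u
  haveI : Nonempty (Fin M) := ⟨⟨0, hM⟩⟩
  set i := idx x with hi
  have hxB : x ∈ B i := hidx x
  have hδ0 : (0 : ℝ) ≤ δ := by
    have := hδ i x hxB x hxB
    simpa using this
  -- the state space is bounded, hence `f` bounded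
  set D : ℝ := Finset.univ.sup' Finset.univ_nonempty (fun j => dist (y j) x) with hD
  set Cb : ℝ := ‖f x‖ + (δ + D) with hCb
  have hfbd : ∀ z : X, ‖f z‖ ≤ Cb := by
    intro z
    have h1 : dist z (y (idx z)) ≤ δ := hδ (idx z) z (hidx z) (y (idx z)) (hy (idx z))
    have h2 : dist (y (idx z)) x ≤ D :=
      Finset.le_sup' (fun j => dist (y j) x) (Finset.mem_univ (idx z))
    have h3 : dist (f z) (f x) ≤ dist z x := by
      have := hf.dist_le_mul z x
      simpa using this
    have h4 : dist z x ≤ δ + D := (dist_triangle z (y (idx z)) x).trans (by linarith)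
    have h5 : |f z| - |f x| ≤ |f z - f x| := abs_sub_abs_le_abs_sub _ _
    rw [Real.dist_eq] at h3
    simp only [Real.norm_eq_abs, hCb, Real.norm_eq_abs]
    linarith
  have hf_int : ∀ (ν : Measure X), IsFiniteMeasure ν → Integrable f ν := by
    intro ν hν
    exact (integrable_const Cb).mono' hf.continuous.aestronglyMeasurable (ae_of_all _ hfbd)
  -- probability weights in each bin
  have hSmeas : ∀ j : Fin M, Measurable fun a => ((T a u) (B j)).toReal :=
    fun j => (measurable_kernel_apply T hTprob KT hTLip u (hBmeas j)).ennreal_toReal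
  have hSbd : ∀ (j : Fin M) (a : X), ((T a u) (B j)).toReal ≤ 1 := by
    intro j a
    haveI := hTprob a u
    have h1 : T a u (B j) ≤ 1 := by
      have := measure_mono (μ := T a u) (Set.subset_univ (B j))
      rwa [measure_univ] at this
    have := ENNReal.toReal_mono (by simp) h1
    simpa using this
  set πB : ℝ := (π (B i)).toReal with hπBdef
  have hπB : 0 < πB := ENNReal.toReal_pos (hπ i).ne' (measure_ne_top π _)
  set g : X → ℝ := fun a => ∫ z, f z ∂(T a u) with hg
  set h : X → ℝ := fun a => ∑ j : Fin M, ((T a u) (B j)).toReal * f (y j) with hh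
  -- the piecewise-constant approximation of `f`
  have hfhat_eq : ∀ z : X,
      (∑ j : Fin M, (B j).indicator (fun _ => f (y j)) z) = f (y (idx z)) := by
    intro z
    rw [Finset.sum_eq_single (idx z)]
    · exact Set.indicator_of_mem (hidx z) _
    · intro j _ hj
      refine Set.indicator_of_notMem (fun hzj => ?_) _
      exact Set.disjoint_left.1 (hBdisj hj) hzj (hidx z)
    · intro hmem
      exact absurd (Finset.mem_univ _) hmem
  have hfhat_int : ∀ a : X, Integrable (fun z => f (y (idx z))) (T a u) := by
    intro a
    haveI := hTprob a u
    have : Integrable (fun z => ∑ j : Fin M, (B j).indicator (fun _ => f (y j)) z)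
        (T a u) :=
      integrable_finset_sum _ fun j _ => (integrable_const (f (y j))).indicator (hBmeas j)
    exact this.congr (ae_of_all _ hfhat_eq)
  have h_eq_int : ∀ a : X, h a = ∫ z, f (y (idx z)) ∂(T a u) := by
    intro a
    haveI := hTprob a u
    calc h a = ∑ j : Fin M, ∫ z, (B j).indicator (fun _ => f (y j)) z ∂(T a u) := by
          refine Finset.sum_congr rfl fun j _ => ?_
          rw [integral_indicator_const _ (hBmeas j), smul_eq_mul, measureReal_def]
      _ = ∫ z, ∑ j : Fin M, (B j).indicator (fun _ => f (y j)) z ∂(T a u) :=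
          (integral_finset_sum _ fun j _ =>
            (integrable_const (f (y j))).indicator (hBmeas j)).symm
      _ = ∫ z, f (y (idx z)) ∂(T a u) := by
          refine integral_congr_ae (ae_of_all _ fun z => ?_)
          exact hfhat_eq z
  -- step 1: `|h a - g a| ≤ δ`
  have hhg : ∀ a : X, |h a - g a| ≤ δ := by
    intro a
    haveI := hTprob a u
    rw [h_eq_int a, hg, ← integral_sub (hfhat_int a) (hf_int (T a u) inferInstance)]
    have hb : ∀ z : X, ‖f (y (idx z)) - f z‖ ≤ δ := by
      intro z
      rw [Real.norm_eq_abs, ← Real.dist_eq]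
      have h1 : dist (f (y (idx z))) (f z) ≤ dist (y (idx z)) z := by
        have := hf.dist_le_mul (y (idx z)) z
        simpa using this
      exact h1.trans (hδ (idx z) (y (idx z)) (hy (idx z)) z (hidx z))
    have hle : ‖∫ z, (f (y (idx z)) - f z) ∂(T a u)‖ ≤ ∫ _z, δ ∂(T a u) :=
      norm_integral_le_of_norm_le (integrable_const δ) (ae_of_all _ hb)
    rw [integral_const, probReal_univ] at hle
    simpa using hle
  -- step 2: `|g a - g x| ≤ KT * δ` for `a ∈ B i`
  have hga : ∀ a ∈ B i, |g a - g x| ≤ (KT : ℝ) * δ := by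
    intro a ha
    exact (hTLip f hf u a x).trans
      (mul_le_mul_of_nonneg_left (hδ i a ha x hxB) KT.coe_nonneg)
  have hkey : ∀ a ∈ B i, |h a - g x| ≤ (1 + (KT : ℝ)) * δ := by
    intro a ha
    have h1 := hhg a
    have h2 := hga a ha
    have h3 : |h a - g x| ≤ |h a - g a| + |g a - g x| := abs_sub_le _ _ _
    have h4 := abs_sub_le (h a) (g a) (g x)
    nlinarith
  -- compute the integral against the quantized measure
  have hw0 : ∀ j : Fin M,
      (0 : ℝ) ≤ (∫ a in B i, ((T a u) (B j)).toReal ∂π) / πB :=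
    fun j => div_nonneg (integral_nonneg fun a => ENNReal.toReal_nonneg)
      ENNReal.toReal_nonneg
  have hμq : (∫ z, f z
        ∂(∑ j : Fin M, ENNReal.ofReal
          ((∫ a in B i, ((T a u) (B j)).toReal ∂π) / πB) • Measure.dirac (y j)))
      = ∑ j : Fin M, ((∫ a in B i, ((T a u) (B j)).toReal ∂π) / πB) * f (y j) := by
    rw [integral_finset_sum_measure]
    · refine Finset.sum_congr rfl fun j _ => ?_
      rw [integral_smul_measure, integral_dirac' f (y j) hf.continuous.stronglyMeasurable,
        ENNReal.toReal_ofReal (hw0 j), smul_eq_mul]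
    · intro j _
      refine Integrable.smul_measure ?_ ENNReal.ofReal_ne_top
      exact hf_int (Measure.dirac (y j)) inferInstance
  -- rewrite the sum as an average of `h` over the bin
  have hsj_int : ∀ j : Fin M,
      Integrable (fun a => ((T a u) (B j)).toReal * f (y j)) (π.restrict (B i)) := by
    intro j
    refine (integrable_const |f (y j)|).mono'
      ((hSmeas j).mul_const _).aestronglyMeasurable (ae_of_all _ fun a => ?_)
    rw [Real.norm_eq_abs, abs_mul]
    have h1 : |((T a u) (B j)).toReal| ≤ 1 := by
      rw [abs_of_nonneg ENNReal.toReal_nonneg]; exact hSbd j a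
    nlinarith [abs_nonneg (f (y j)), abs_nonneg (((T a u) (B j)).toReal)]
  have hh_int : Integrable h (π.restrict (B i)) :=
    integrable_finset_sum _ fun j _ => hsj_int j
  have hsum : (∑ j : Fin M, ((∫ a in B i, ((T a u) (B j)).toReal ∂π) / πB) * f (y j))
      = (∫ a in B i, h a ∂π) / πB := by
    have h1 : ∀ j : Fin M,
        ((∫ a in B i, ((T a u) (B j)).toReal ∂π) / πB) * f (y j)
        = (∫ a in B i, ((T a u) (B j)).toReal * f (y j) ∂π) / πB := by
      intro j
      rw [div_mul_eq_mul_div, MeasureTheory.integral_mul_const]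
    simp_rw [h1]
    rw [← Finset.sum_div]
    congr 1
    exact (integral_finset_sum _ fun j _ => hsj_int j).symm
  -- final assembly
  rw [dFun, hμq, hsum]
  have hconst : ∫ _a in B i, g x ∂π = πB * g x := by
    rw [setIntegral_const, smul_eq_mul, measureReal_def]
  have hdiff : (∫ a in B i, h a ∂π) / πB - g x
      = (∫ a in B i, (h a - g x) ∂π) / πB := by
    rw [integral_sub hh_int (integrable_const _), hconst]
    field_simp
  rw [hdiff]
  have hbnd : ‖∫ a in B i, (h a - g x) ∂π‖ ≤ ∫ _a in B i, (1 + (KT : ℝ)) * δ ∂π := by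
    refine norm_integral_le_of_norm_le (integrable_const _) ?_
    refine (ae_restrict_iff' (hBmeas i)).2 (ae_of_all _ fun a ha => ?_)
    rw [Real.norm_eq_abs]
    exact hkey a ha
  rw [setIntegral_const, smul_eq_mul] at hbnd
  rw [abs_div, abs_of_pos hπB]
  rw [div_le_iff₀ hπB]
  calc |∫ a in B i, (h a - g x) ∂π| ≤ πB * ((1 + (KT : ℝ)) * δ) := by
        rw [Real.norm_eq_abs] at hbnd; exact hbnd
    _ = (1 + (KT : ℝ)) * δ * πB := by ring

end MDPRobust
end
end
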